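/- arXiv:1511.04950 — 7 statements merged into one kernel-verified Lean document; each statement's English description precedes it below -/
import Mathlib

section
/- Let η₁ > 1 and η₂ > 1 and let η be the weight function defined piecewise on ℝ². Then for all x, y ∈ ℝ² and all θ ∈ [0,1], one has η(x + θy) − η(x) ≤ η(y) and also η(x) − η(x + θy) ≤ η(−y). -/
private lemma piece_eq_max (η₁ η₂ t : ℝ) (h1 : 1 < η₁) (h2 : 1 < η₂) :
    (if t ≤ 0 then η₁ * |t| else η₂ * |t|) = max (η₁ * (-t)) (η₂ * t) := by
  split_ifs with h
  · rw [abs_of_nonpos h, max_eq_left]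
    nlinarith
  · push_neg at h
    rw [abs_of_pos h, max_eq_right]
    nlinarith

private lemma fmax_nonneg (η₁ η₂ t : ℝ) (h1 : 1 < η₁) (h2 : 1 < η₂) :
    0 ≤ max (η₁ * (-t)) (η₂ * t) := by
  rcases le_total t 0 with h | h
  · exact le_max_of_le_left (by nlinarith)
  · exact le_max_of_le_right (by nlinarith)

private lemma fmax_add (η₁ η₂ a b : ℝ) :
    max (η₁ * (-(a + b))) (η₂ * (a + b)) ≤
      max (η₁ * (-a)) (η₂ * a) + max (η₁ * (-b)) (η₂ * b) := by
  apply max_le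
  · have : η₁ * (-(a + b)) = η₁ * (-a) + η₁ * (-b) := by ring
    rw [this]
    exact add_le_add (le_max_left _ _) (le_max_left _ _)
  · have : η₂ * (a + b) = η₂ * a + η₂ * b := by ring
    rw [this]
    exact add_le_add (le_max_right _ _) (le_max_right _ _)

private lemma fmax_smul (η₁ η₂ θ b : ℝ) (h1 : 1 < η₁) (h2 : 1 < η₂)
    (h0 : 0 ≤ θ) (h1' : θ ≤ 1) :
    max (η₁ * (-(θ * b))) (η₂ * (θ * b)) ≤ max (η₁ * (-b)) (η₂ * b) := by
  have hnn := fmax_nonneg η₁ η₂ b h1 h2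
  apply max_le
  · calc η₁ * (-(θ * b)) = θ * (η₁ * (-b)) := by ring
    _ ≤ max (η₁ * (-b)) (η₂ * b) := by
        rcases le_total (η₁ * (-b)) 0 with h | h
        · nlinarith
        · calc θ * (η₁ * (-b)) ≤ 1 * (η₁ * (-b)) := by nlinarith
          _ ≤ max (η₁ * (-b)) (η₂ * b) := by rw [one_mul]; exact le_max_left _ _
  · calc η₂ * (θ * b) = θ * (η₂ * b) := by ring
    _ ≤ max (η₁ * (-b)) (η₂ * b) := by
        rcases le_total (η₂ * b) 0 with h | h
        · nlinarith
        · calc θ * (η₂ * b) ≤ 1 * (η₂ * b) := by nlinarith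
          _ ≤ max (η₁ * (-b)) (η₂ * b) := by rw [one_mul]; exact le_max_right _ _

private lemma one_dim (η₁ η₂ θ a b : ℝ) (h1 : 1 < η₁) (h2 : 1 < η₂)
    (h0 : 0 ≤ θ) (h1' : θ ≤ 1) :
    max (η₁ * (-(a + θ * b))) (η₂ * (a + θ * b)) ≤
      max (η₁ * (-a)) (η₂ * a) + max (η₁ * (-b)) (η₂ * b) :=
  le_trans (fmax_add η₁ η₂ a (θ * b))
    (add_le_add_right (fmax_smul η₁ η₂ θ b h1 h2 h0 h1') _)

/-- The piecewise weight function η on ℝ² with parameters η₁, η₂ > 1 satisfies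
    η(x + θy) − η(x) ≤ η(y) and η(x) − η(x + θy) ≤ η(−y) for all x, y and θ ∈ [0,1]. -/
theorem stmt_0 (η₁ η₂ : ℝ) (hη₁ : 1 < η₁) (hη₂ : 1 < η₂)
    (η : ℝ → ℝ → ℝ)
    (hη : ∀ x₁ x₂ : ℝ, η x₁ x₂ =
      if x₁ ≤ 0 then
        (if x₂ ≤ 0 then η₁ * (|x₁| + |x₂|) else η₁ * |x₁| + η₂ * |x₂|)
      else
        (if x₂ ≤ 0 then η₂ * |x₁| + η₁ * |x₂| else η₂ * (|x₁| + |x₂|)))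
    (x₁ x₂ y₁ y₂ θ : ℝ) (hθ : θ ∈ Set.Icc (0 : ℝ) 1) :
    η (x₁ + θ * y₁) (x₂ + θ * y₂) - η x₁ x₂ ≤ η y₁ y₂ ∧
    η x₁ x₂ - η (x₁ + θ * y₁) (x₂ + θ * y₂) ≤ η (-y₁) (-y₂) := by
  obtain ⟨h0, h1'⟩ := hθ
  have key : ∀ a b : ℝ, η a b =
      max (η₁ * (-a)) (η₂ * a) + max (η₁ * (-b)) (η₂ * b) := by
    intro a b
    rw [hη]
    rw [← piece_eq_max η₁ η₂ a hη₁ hη₂, ← piece_eq_max η₁ η₂ b hη₁ hη₂]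
    split_ifs <;> ring
  simp only [key]
  constructor
  · have H1 := one_dim η₁ η₂ θ x₁ y₁ hη₁ hη₂ h0 h1'
    have H2 := one_dim η₁ η₂ θ x₂ y₂ hη₁ hη₂ h0 h1'
    linarith
  · have H1 := one_dim η₁ η₂ θ (x₁ + θ * y₁) (-y₁) hη₁ hη₂ h0 h1'
    have H2 := one_dim η₁ η₂ θ (x₂ + θ * y₂) (-y₂) hη₁ hη₂ h0 h1'
    have e1 : x₁ + θ * y₁ + θ * -y₁ = x₁ := by ring
    have e2 : x₂ + θ * y₂ + θ * -y₂ = x₂ := by ring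
    rw [e1] at H1
    rw [e2] at H2
    linarith
end

section
/- Let A > 0. There exists a constant C > 0, depending only on A, such that for every δ ∈ (0,1] and all real numbers g₀, g₁, g₂ with |g₀| ≤ Aδ, |g₁| ≤ A and |g₂| ≤ A, the unique polynomial p of degree at most 5 satisfying p(δ) = 0, p'(δ) = 0, p''(δ) = 0, p(−δ) = g₀, p'(−δ) = g₁, p''(−δ) = g₂ obeys, for all n ∈ [−δ, δ]: |p(n)| ≤ Cδ, |p'(n)| ≤ C, and |p''(n)| ≤ C/δ. -/
open Polynomial

private lemma abs3 (a b c : ℝ) : |a + b + c| ≤ |a| + |b| + |c| :=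
  (abs_add_le _ _).trans (by linarith [abs_add_le a b])

set_option maxHeartbeats 1000000 in
/-- Uniform bounds p = O(δ), p' = O(1), p'' = O(1/δ) for the quintic smoothing
    polynomial, when |g₀| ≤ Aδ, |g₁| ≤ A, |g₂| ≤ A. -/
theorem stmt_3 (A : ℝ) (hA : 0 < A) :
    ∃ C : ℝ, 0 < C ∧
      ∀ δ : ℝ, δ ∈ Set.Ioc (0 : ℝ) 1 →
      ∀ g₀ g₁ g₂ : ℝ, |g₀| ≤ A * δ → |g₁| ≤ A → |g₂| ≤ A →
      ∀ p : Polynomial ℝ, p.degree ≤ 5 →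
        p.eval δ = 0 → p.derivative.eval δ = 0 → p.derivative.derivative.eval δ = 0 →
        p.eval (-δ) = g₀ → p.derivative.eval (-δ) = g₁ →
        p.derivative.derivative.eval (-δ) = g₂ →
      ∀ n ∈ Set.Icc (-δ) δ,
        |p.eval n| ≤ C * δ ∧ |p.derivative.eval n| ≤ C ∧
        |p.derivative.derivative.eval n| ≤ C / δ := by
  refine ⟨200 * A, by positivity, ?_⟩
  rintro δ ⟨hδ0, hδ1⟩ g₀ g₁ g₂ hg₀ hg₁ hg₂ p hdeg h0 h1 h2 e0 e1 e2 n ⟨hn1, hn2⟩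
  by_cases hp : p = 0
  · subst hp
    simp only [Polynomial.derivative_zero, Polynomial.eval_zero, abs_zero]
    exact ⟨by positivity, by positivity, by positivity⟩
  -- factor p = (X - C δ)^3 * q with deg q ≤ 2
  have hmult : 2 < p.rootMultiplicity δ := by
    rw [Polynomial.lt_rootMultiplicity_iff_isRoot_iterate_derivative hp]
    intro m hm
    interval_cases m <;>
      simp [Polynomial.IsRoot, Function.iterate_succ, *]
  have hdvd : (X - C δ)^3 ∣ p :=
    dvd_trans (pow_dvd_pow _ hmult) (p.pow_rootMultiplicity_dvd δ)
  obtain ⟨q, hpq⟩ := hdvd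
  have hq0 : q ≠ 0 := by rintro rfl; simp at hpq; exact hp hpq
  have hdq : q.natDegree ≤ 2 := by
    have hmul : p.degree = 3 + q.degree := by
      rw [hpq, Polynomial.degree_mul, Polynomial.degree_pow, Polynomial.degree_X_sub_C]
      norm_num
    rw [Polynomial.natDegree_le_iff_degree_le]
    have h5 := hdeg
    rw [hmul, Polynomial.degree_eq_natDegree hq0] at h5
    rw [Polynomial.degree_eq_natDegree hq0]
    have h5' : (3 + q.natDegree : ℕ) ≤ 5 := by exact_mod_cast h5
    exact_mod_cast by omega
  set c0 := q.coeff 0 with hc0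
  set c1 := q.coeff 1 with hc1
  set c2 := q.coeff 2 with hc2
  have hp2 : p = (X - C δ)^3 * (C c2 * X^2 + C c1 * X + C c0) := by
    rw [hpq]; congr 1
    ext i
    match i with
    | 0 => simp [hc0]
    | 1 => simp [hc1]
    | 2 => simp [hc2]
    | (k+3) =>
      rw [Polynomial.coeff_eq_zero_of_natDegree_lt (by omega)]
      simp [Polynomial.coeff_X_pow, Polynomial.coeff_C]
  -- closed-form evaluations
  have E : ∀ x, p.eval x = (x-δ)^3 * (c2*x^2+c1*x+c0) := fun x => by
    rw [hp2]; simp only [eval_mul, eval_pow, eval_sub, eval_add, eval_X, eval_C]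
  have D : ∀ x, p.derivative.eval x
      = 3*(x-δ)^2 * (c2*x^2+c1*x+c0) + (x-δ)^3 * (2*c2*x+c1) := fun x => by
    rw [hp2]
    simp only [Polynomial.derivative_mul, Polynomial.derivative_pow, derivative_sub,
      derivative_add, derivative_X, derivative_C, derivative_one, derivative_zero,
      mul_zero, zero_mul, add_zero, zero_add, mul_one, sub_zero,
      eval_mul, eval_pow, eval_sub, eval_add, eval_X, eval_C, eval_natCast]
    push_cast; ring
  have DD : ∀ x, p.derivative.derivative.eval x
      = 6*(x-δ) * (c2*x^2+c1*x+c0) + 6*(x-δ)^2 * (2*c2*x+c1) + (x-δ)^3 * (2*c2) := fun x => by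
    rw [hp2]
    simp only [Polynomial.derivative_mul, Polynomial.derivative_pow, derivative_sub,
      derivative_add, derivative_X, derivative_C, derivative_one, derivative_zero,
      Polynomial.derivative_natCast, mul_zero, zero_mul, add_zero, zero_add, mul_one, sub_zero,
      eval_mul, eval_pow, eval_sub, eval_add, eval_X, eval_C, eval_natCast]
    push_cast; ring
  -- abbreviations for normal derivatives of q at -δ
  set u : ℝ := c2*δ^2 - c1*δ + c0 with hu_def
  set v : ℝ := c1 - 2*c2*δ with hv_def
  set w : ℝ := 2*c2 with hw_def
  have hE0 : 8*δ^3*u = -g₀ := by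
    have h := E (-δ); rw [e0] at h; rw [hu_def]; linear_combination h
  have hE1 : 8*δ^3*v = 12*δ^2*u - g₁ := by
    have h := D (-δ); rw [e1] at h
    rw [hv_def, hu_def]; linear_combination h
  have hE2 : 8*δ^3*w = -(12*δ*u) + 24*δ^2*v - g₂ := by
    have h := DD (-δ); rw [e2] at h
    rw [hw_def, hu_def, hv_def]; linear_combination h
  have habs_mul : ∀ (k x : ℝ), 0 < k → |k * x| = k * |x| := fun k x hk => by
    rw [abs_mul, abs_of_pos hk]
  have hd3 : (0:ℝ) < 8*δ^3 := by positivity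
  -- bounds on u, v, w
  have hu' : 8*δ^2 * |u| ≤ A := by
    have h8 : 8*δ^3 * |u| ≤ A*δ := by
      rw [← habs_mul _ _ hd3, hE0, abs_neg]; exact hg₀
    nlinarith [abs_nonneg u]
  have hv' : 16*δ^3 * |v| ≤ 5*A := by
    have h8 : 8*δ^3 * |v| ≤ 12*δ^2 * |u| + |g₁| := by
      rw [← habs_mul _ _ hd3, hE1]
      calc |12*δ^2*u - g₁| ≤ |12*δ^2*u| + |g₁| := abs_sub _ _
        _ = 12*δ^2 * |u| + |g₁| := by rw [habs_mul _ _ (by positivity)]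
    linarith
  have hw' : 4*δ^4 * |w| ≤ 5*A := by
    have h8 : 8*δ^3 * |w| ≤ 12*δ * |u| + 24*δ^2 * |v| + |g₂| := by
      rw [← habs_mul _ _ hd3, hE2]
      calc |(-(12*δ*u)) + 24*δ^2*v - g₂|
          ≤ |(-(12*δ*u)) + 24*δ^2*v| + |g₂| := abs_sub _ _
        _ ≤ |(-(12*δ*u))| + |24*δ^2*v| + |g₂| := by linarith [abs_add_le (-(12*δ*u)) (24*δ^2*v)]
        _ = 12*δ * |u| + 24*δ^2 * |v| + |g₂| := by
            rw [abs_neg, habs_mul (12*δ) u (by positivity),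
              habs_mul (24*δ^2) v (by positivity)]
    have hmul := mul_le_mul_of_nonneg_left h8 hδ0.le
    nlinarith [abs_nonneg w, abs_nonneg u, abs_nonneg v]
  -- bounds on |n ± δ|
  have hnd : |n - δ| ≤ 2*δ := abs_le.mpr ⟨by linarith, by linarith⟩
  have hne : |n + δ| ≤ 2*δ := abs_le.mpr ⟨by linarith, by linarith⟩
  have hnd3 : |n - δ|^3 ≤ (2*δ)^3 := by gcongr
  have hnd2 : |n - δ|^2 ≤ (2*δ)^2 := by gcongr
  have hne2 : |n + δ|^2 ≤ (2*δ)^2 := by gcongr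
  -- bound on q(n)
  have hQ : δ^2 * |c2*n^2 + c1*n + c0| ≤ 4*A := by
    have hid : c2*n^2 + c1*n + c0 = u + v*(n+δ) + w/2*(n+δ)^2 := by
      rw [hu_def, hv_def, hw_def]; ring
    have habs : |c2*n^2 + c1*n + c0| ≤ |u| + |v| * (2*δ) + |w|/2 * (2*δ)^2 := by
      rw [hid]
      have t0 := abs3 u (v*(n+δ)) (w/2*(n+δ)^2)
      have t1 : |v*(n+δ)| ≤ |v| * (2*δ) := by
        rw [abs_mul]; exact mul_le_mul_of_nonneg_left hne (abs_nonneg v)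
      have t2 : |w/2*(n+δ)^2| ≤ |w|/2 * (2*δ)^2 := by
        rw [abs_mul, abs_div, abs_two, abs_pow]
        exact mul_le_mul_of_nonneg_left hne2 (by positivity)
      linarith
    have hm := mul_le_mul_of_nonneg_left habs (by positivity : (0:ℝ) ≤ δ^2)
    linarith [hm, hu', hv', hw']
  -- bound on q'(n)
  have hR : δ^3 * |2*c2*n + c1| ≤ 3*A := by
    have hid : 2*c2*n + c1 = v + w*(n+δ) := by
      rw [hv_def, hw_def]; ring
    have habs : |2*c2*n + c1| ≤ |v| + |w| * (2*δ) := by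
      rw [hid]
      have t0 := abs_add_le v (w*(n+δ))
      have t1 : |w*(n+δ)| ≤ |w| * (2*δ) := by
        rw [abs_mul]; exact mul_le_mul_of_nonneg_left hne (abs_nonneg w)
      linarith
    have hm := mul_le_mul_of_nonneg_left habs (by positivity : (0:ℝ) ≤ δ^3)
    linarith [hm, hv', hw']
  refine ⟨?_, ?_, ?_⟩
  · -- |p(n)| ≤ 200 A δ
    have h8 : |p.eval n| ≤ (2*δ)^3 * |c2*n^2+c1*n+c0| := by
      rw [E n, abs_mul, abs_pow]
      exact mul_le_mul_of_nonneg_right hnd3 (abs_nonneg _)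
    have hm := mul_le_mul_of_nonneg_left hQ (by linarith : (0:ℝ) ≤ 8*δ)
    linarith [h8, hm, mul_pos hA hδ0]
  · -- |p'(n)| ≤ 200 A
    have h8 : |p.derivative.eval n|
        ≤ 3*(2*δ)^2 * |c2*n^2+c1*n+c0| + (2*δ)^3 * |2*c2*n+c1| := by
      rw [D n]
      have t0 := abs_add_le (3*(n-δ)^2*(c2*n^2+c1*n+c0)) ((n-δ)^3*(2*c2*n+c1))
      have t1 : |3*(n-δ)^2*(c2*n^2+c1*n+c0)| ≤ 3*(2*δ)^2 * |c2*n^2+c1*n+c0| := by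
        rw [show (3:ℝ)*(n-δ)^2*(c2*n^2+c1*n+c0) = 3*((n-δ)^2*(c2*n^2+c1*n+c0)) by ring,
          habs_mul 3 _ (by norm_num), abs_mul, abs_pow]
        have := mul_le_mul_of_nonneg_right hnd2 (abs_nonneg (c2*n^2+c1*n+c0))
        linarith [this]
      have t2 : |(n-δ)^3*(2*c2*n+c1)| ≤ (2*δ)^3 * |2*c2*n+c1| := by
        rw [abs_mul, abs_pow]
        exact mul_le_mul_of_nonneg_right hnd3 (abs_nonneg _)
      linarith
    linarith [h8, hQ, hR, hA.le]
  · -- |p''(n)| ≤ 200 A / δ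
    rw [le_div_iff₀ hδ0]
    have h8 : |p.derivative.derivative.eval n|
        ≤ 6*(2*δ) * |c2*n^2+c1*n+c0| + 6*(2*δ)^2 * |2*c2*n+c1| + (2*δ)^3 * |w| := by
      rw [DD n]
      have t0 := abs3 (6*(n-δ)*(c2*n^2+c1*n+c0)) (6*(n-δ)^2*(2*c2*n+c1)) ((n-δ)^3*w)
      have t1 : |6*(n-δ)*(c2*n^2+c1*n+c0)| ≤ 6*(2*δ) * |c2*n^2+c1*n+c0| := by
        rw [show (6:ℝ)*(n-δ)*(c2*n^2+c1*n+c0) = 6*((n-δ)*(c2*n^2+c1*n+c0)) by ring,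
          habs_mul 6 _ (by norm_num), abs_mul]
        have := mul_le_mul_of_nonneg_right hnd (abs_nonneg (c2*n^2+c1*n+c0))
        linarith [this]
      have t2 : |6*(n-δ)^2*(2*c2*n+c1)| ≤ 6*(2*δ)^2 * |2*c2*n+c1| := by
        rw [show (6:ℝ)*(n-δ)^2*(2*c2*n+c1) = 6*((n-δ)^2*(2*c2*n+c1)) by ring,
          habs_mul 6 _ (by norm_num), abs_mul, abs_pow]
        have := mul_le_mul_of_nonneg_right hnd2 (abs_nonneg (2*c2*n+c1))
        linarith [this]
      have t3 : |(n-δ)^3*w| ≤ (2*δ)^3 * |w| := by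
        rw [abs_mul, abs_pow]
        exact mul_le_mul_of_nonneg_right hnd3 (abs_nonneg _)
      linarith
    have hmul := mul_le_mul_of_nonneg_right h8 hδ0.le
    nlinarith [hmul, hQ, hR, hw', hA.le, abs_nonneg w, mul_pos hA hδ0]
end

section
/- Let A, B, C ∈ ℝ, let V(s₁, s₂) = A s₁² + B s₂² + 2C s₁ s₂, and let k(y) = (λ/(√(2π)γ))·exp(−(y−ν)²/(2γ²)) with λ > 0, γ > 0, ν ∈ ℝ. Then for all s₁, s₂ ∈ ℝ the function y ↦ (V(s₁ e^y, s₂) − V(s₁, s₂) − s₁(e^y − 1)·∂V/∂s₁(s₁, s₂))·k(y) is integrable on ℝ and ∫_ℝ (V(s₁ e^y, s₂) − V(s₁, s₂) − s₁(e^y − 1)·∂V/∂s₁(s₁, s₂)) k(y) dy = λ(e^{2ν+2γ²} − 2e^{ν+γ²/2} + 1) · A s₁². -/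
open MeasureTheory Real

lemma gauss_key (γ ν t : ℝ) (hγ : 0 < γ) :
    Integrable (fun y : ℝ => Real.exp (t * y) * Real.exp (-(y - ν) ^ 2 / (2 * γ ^ 2))) ∧
    ∫ y : ℝ, Real.exp (t * y) * Real.exp (-(y - ν) ^ 2 / (2 * γ ^ 2))
      = Real.sqrt (2 * Real.pi) * γ * Real.exp (t * ν + t ^ 2 * γ ^ 2 / 2) := by
  have hb : (0:ℝ) < (2 * γ ^ 2)⁻¹ := by positivity
  have hfun : ∀ y : ℝ, Real.exp (t * y) * Real.exp (-(y - ν) ^ 2 / (2 * γ ^ 2))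
      = Real.exp (t * ν + t ^ 2 * γ ^ 2 / 2) *
        Real.exp (-(2 * γ ^ 2)⁻¹ * (y - (ν + t * γ ^ 2)) ^ 2) := by
    intro y
    rw [← Real.exp_add, ← Real.exp_add]
    congr 1
    have h2 : (2 : ℝ) * γ ^ 2 ≠ 0 := by positivity
    field_simp
    ring
  have hint : Integrable (fun y : ℝ => Real.exp (-(2 * γ ^ 2)⁻¹ * y ^ 2)) :=
    integrable_exp_neg_mul_sq hb
  constructor
  · have h2 := (hint.comp_sub_right (ν + t * γ ^ 2)).const_mul
      (Real.exp (t * ν + t ^ 2 * γ ^ 2 / 2))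
    exact h2.congr (Filter.Eventually.of_forall fun y => (hfun y).symm)
  · rw [show (fun y : ℝ => Real.exp (t * y) * Real.exp (-(y - ν) ^ 2 / (2 * γ ^ 2)))
        = fun y : ℝ => Real.exp (t * ν + t ^ 2 * γ ^ 2 / 2) *
            Real.exp (-(2 * γ ^ 2)⁻¹ * (y - (ν + t * γ ^ 2)) ^ 2) from funext hfun,
      MeasureTheory.integral_const_mul,
      integral_sub_right_eq_self (fun y : ℝ => Real.exp (-(2 * γ ^ 2)⁻¹ * y ^ 2))
        (ν + t * γ ^ 2),
      integral_gaussian]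
    have : Real.pi / (2 * γ ^ 2)⁻¹ = 2 * Real.pi * γ ^ 2 := by
      field_simp
    rw [this, show (2 : ℝ) * Real.pi * γ ^ 2 = (2 * Real.pi) * γ ^ 2 by ring,
      Real.sqrt_mul (by positivity), Real.sqrt_sq hγ.le]
    ring

/-- The compensated jump term of the pricing PIDE applied to the quadratic function
    V(s₁,s₂) = A s₁² + B s₂² + 2C s₁ s₂ under the Merton jump density: it is
    integrable and equals Λ · A s₁² with Λ = λ(e^{2ν+2γ²} − 2e^{ν+γ²/2} + 1). -/
theorem stmt_8 (A B C lam γ ν : ℝ) (hlam : 0 < lam) (hγ : 0 < γ) :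
    let V : ℝ → ℝ → ℝ := fun s₁ s₂ => A * s₁ ^ 2 + B * s₂ ^ 2 + 2 * C * s₁ * s₂
    let k : ℝ → ℝ := fun y =>
      lam / (Real.sqrt (2 * Real.pi) * γ) * Real.exp (-(y - ν) ^ 2 / (2 * γ ^ 2))
    ∀ s₁ s₂ : ℝ,
      Integrable (fun y : ℝ =>
        (V (s₁ * Real.exp y) s₂ - V s₁ s₂ -
          s₁ * (Real.exp y - 1) * deriv (fun a => V a s₂) s₁) * k y) ∧
      ∫ y : ℝ,
        (V (s₁ * Real.exp y) s₂ - V s₁ s₂ -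
          s₁ * (Real.exp y - 1) * deriv (fun a => V a s₂) s₁) * k y
        = lam * (Real.exp (2 * ν + 2 * γ ^ 2) - 2 * Real.exp (ν + γ ^ 2 / 2) + 1) *
            A * s₁ ^ 2 := by
  intro V k s₁ s₂
  have hderiv : deriv (fun a => V a s₂) s₁ = 2 * A * s₁ + 2 * C * s₂ := by
    have h : HasDerivAt (fun a : ℝ => A * a ^ 2 + B * s₂ ^ 2 + 2 * C * a * s₂)
        (2 * A * s₁ + 2 * C * s₂) s₁ := by
      have h1 : HasDerivAt (fun a : ℝ => a) 1 s₁ := hasDerivAt_id s₁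
      have hp := hasDerivAt_pow 2 s₁
      refine (((hp.const_mul A).add_const (B * s₂ ^ 2)).add
        ((h1.const_mul (2 * C)).mul_const s₂)).congr_deriv ?_
      rw [show (2:ℕ) - 1 = 1 from rfl]; push_cast
      ring
    exact h.deriv
  set c : ℝ := lam / (Real.sqrt (2 * Real.pi) * γ) with hc
  have key : ∀ y : ℝ,
      (V (s₁ * Real.exp y) s₂ - V s₁ s₂ -
        s₁ * (Real.exp y - 1) * deriv (fun a => V a s₂) s₁) * k y
      = (A * s₁ ^ 2 * c) *
          (Real.exp (2 * y) * Real.exp (-(y - ν) ^ 2 / (2 * γ ^ 2))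
           - 2 * (Real.exp (1 * y) * Real.exp (-(y - ν) ^ 2 / (2 * γ ^ 2)))
           + Real.exp (0 * y) * Real.exp (-(y - ν) ^ 2 / (2 * γ ^ 2))) := by
    intro y
    simp only [V, k, hderiv]
    rw [show Real.exp (2 * y) = Real.exp y * Real.exp y by rw [two_mul, Real.exp_add],
      one_mul, zero_mul, Real.exp_zero]
    ring
  have h2 := gauss_key γ ν 2 hγ
  have h1 := gauss_key γ ν 1 hγ
  have h0 := gauss_key γ ν 0 hγ
  have hintc : Integrable (fun y : ℝ => (A * s₁ ^ 2 * c) *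
      (Real.exp (2 * y) * Real.exp (-(y - ν) ^ 2 / (2 * γ ^ 2))
       - 2 * (Real.exp (1 * y) * Real.exp (-(y - ν) ^ 2 / (2 * γ ^ 2)))
       + Real.exp (0 * y) * Real.exp (-(y - ν) ^ 2 / (2 * γ ^ 2)))) :=
    (((h2.1.sub (h1.1.const_mul 2)).add h0.1).const_mul _)
  constructor
  · exact hintc.congr (Filter.Eventually.of_forall fun y => (key y).symm)
  · rw [show (fun y : ℝ => (V (s₁ * Real.exp y) s₂ - V s₁ s₂ -
        s₁ * (Real.exp y - 1) * deriv (fun a => V a s₂) s₁) * k y)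
        = fun y : ℝ => (A * s₁ ^ 2 * c) *
          (Real.exp (2 * y) * Real.exp (-(y - ν) ^ 2 / (2 * γ ^ 2))
           - 2 * (Real.exp (1 * y) * Real.exp (-(y - ν) ^ 2 / (2 * γ ^ 2)))
           + Real.exp (0 * y) * Real.exp (-(y - ν) ^ 2 / (2 * γ ^ 2))) from funext key,
      MeasureTheory.integral_const_mul,
      integral_add (f := fun y : ℝ => Real.exp (2 * y) * Real.exp (-(y - ν) ^ 2 / (2 * γ ^ 2))
          - 2 * (Real.exp (1 * y) * Real.exp (-(y - ν) ^ 2 / (2 * γ ^ 2))))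
        (g := fun y : ℝ => Real.exp (0 * y) * Real.exp (-(y - ν) ^ 2 / (2 * γ ^ 2)))
        ((h2.1.sub (h1.1.const_mul 2))) h0.1,
      integral_sub (f := fun y : ℝ => Real.exp (2 * y) * Real.exp (-(y - ν) ^ 2 / (2 * γ ^ 2)))
        (g := fun y : ℝ => 2 * (Real.exp (1 * y) * Real.exp (-(y - ν) ^ 2 / (2 * γ ^ 2))))
        h2.1 (h1.1.const_mul 2), MeasureTheory.integral_const_mul, h2.2, h1.2, h0.2]
    have hS : Real.sqrt (2 * Real.pi) ≠ 0 := by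
      have := Real.pi_pos; positivity
    have hγ' : γ ≠ 0 := hγ.ne'
    rw [hc]
    field_simp
    ring_nf
    rw [Real.exp_zero]
    ring
end

section
/- Let σ₁, σ₂ > 0, r, ρ, T ∈ ℝ, and for i = 1,2 let kᵢ(y) = (λᵢ/(√(2π)γᵢ))·exp(−(y−νᵢ)²/(2γᵢ²)) with λᵢ > 0, γᵢ > 0, νᵢ ∈ ℝ, and set Λᵢ = λᵢ(e^{2νᵢ+2γᵢ²} − 2e^{νᵢ+γᵢ²/2} + 1). Define V(t, s₁, s₂) = s₁² e^{(r+σ₁²+Λ₁)(T−t)} + s₂² e^{(r+σ₂²+Λ₂)(T−t)} + 2 s₁ s₂ e^{(r+ρσ₁σ₂)(T−t)}. Then for all (t, s₁, s₂) ∈ ℝ³ the jump integrands below are integrable and ∂V/∂t + r s₁ ∂V/∂s₁ + r s₂ ∂V/∂s₂ − rV + (1/2)σ₁² s₁² ∂²V/∂s₁² + ρσ₁σ₂ s₁ s₂ ∂²V/∂s₁∂s₂ + (1/2)σ₂² s₂² ∂²V/∂s₂² + ∫_ℝ (V(t, s₁e^y, s₂) − V(t, s₁, s₂) − s₁(e^y−1)∂V/∂s₁)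 k₁(y) dy + ∫_ℝ (V(t, s₁, s₂e^y) − V(t, s₁, s₂) − s₂(e^y−1)∂V/∂s₂) k₂(y) dy = 0; moreover V(T, s₁, s₂) = (s₁ + s₂)². -/
open MeasureTheory

lemma gauss_shift_integrable (m γ : ℝ) (hγ : 0 < γ) :
    Integrable (fun y : ℝ => Real.exp (-(1 / (2 * γ ^ 2)) * (y - m) ^ 2)) := by
  have hb : (0:ℝ) < 1 / (2 * γ ^ 2) := by positivity
  exact (integrable_exp_neg_mul_sq hb).comp_sub_right m

lemma gauss_shift_integral (m γ : ℝ) (hγ : 0 < γ) :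
    ∫ y : ℝ, Real.exp (-(1 / (2 * γ ^ 2)) * (y - m) ^ 2) = Real.sqrt (2 * Real.pi) * γ := by
  have hb : (0:ℝ) < 1 / (2 * γ ^ 2) := by positivity
  rw [integral_sub_right_eq_self (fun y : ℝ => Real.exp (-(1 / (2 * γ ^ 2)) * y ^ 2)) m,
    integral_gaussian]
  rw [show Real.pi / (1 / (2 * γ ^ 2)) = (2 * Real.pi) * γ ^ 2 by field_simp,
    Real.sqrt_mul (by positivity), Real.sqrt_sq hγ.le]

lemma mgf_key (lam γ ν c : ℝ) (hγ : 0 < γ) :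
    (Integrable (fun y : ℝ => Real.exp (c * y) *
        (lam / (Real.sqrt (2 * Real.pi) * γ) * Real.exp (-(y - ν) ^ 2 / (2 * γ ^ 2))))) ∧
    ∫ y : ℝ, Real.exp (c * y) *
        (lam / (Real.sqrt (2 * Real.pi) * γ) * Real.exp (-(y - ν) ^ 2 / (2 * γ ^ 2)))
      = lam * Real.exp (c * ν + c ^ 2 * γ ^ 2 / 2) := by
  have hγ2 : (γ:ℝ) ^ 2 ≠ 0 := by positivity
  have hsq : Real.sqrt (2 * Real.pi) * γ ≠ 0 := by positivity
  have key : ∀ y : ℝ, Real.exp (c * y) *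
      (lam / (Real.sqrt (2 * Real.pi) * γ) * Real.exp (-(y - ν) ^ 2 / (2 * γ ^ 2)))
      = (lam / (Real.sqrt (2 * Real.pi) * γ) * Real.exp (c * ν + c ^ 2 * γ ^ 2 / 2)) *
        Real.exp (-(1 / (2 * γ ^ 2)) * (y - (ν + c * γ ^ 2)) ^ 2) := by
    intro y
    rw [show Real.exp (c * y) *
      (lam / (Real.sqrt (2 * Real.pi) * γ) * Real.exp (-(y - ν) ^ 2 / (2 * γ ^ 2)))
      = lam / (Real.sqrt (2 * Real.pi) * γ) *
        (Real.exp (c * y) * Real.exp (-(y - ν) ^ 2 / (2 * γ ^ 2))) by ring,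
      ← Real.exp_add, mul_assoc, ← Real.exp_add]
    congr 2
    field_simp
    ring
  constructor
  · have h := (gauss_shift_integrable (ν + c * γ ^ 2) γ hγ).const_mul
      (lam / (Real.sqrt (2 * Real.pi) * γ) * Real.exp (c * ν + c ^ 2 * γ ^ 2 / 2))
    exact h.congr (Filter.Eventually.of_forall fun y => (key y).symm)
  · rw [integral_congr_ae (Filter.Eventually.of_forall key), integral_const_mul,
      gauss_shift_integral _ _ hγ]
    field_simp

lemma jump_key (lam γ ν : ℝ) (hlam : 0 < lam) (hγ : 0 < γ) :
    (Integrable (fun y : ℝ => (Real.exp y - 1) ^ 2 *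
        (lam / (Real.sqrt (2 * Real.pi) * γ) * Real.exp (-(y - ν) ^ 2 / (2 * γ ^ 2))))) ∧
    ∫ y : ℝ, (Real.exp y - 1) ^ 2 *
        (lam / (Real.sqrt (2 * Real.pi) * γ) * Real.exp (-(y - ν) ^ 2 / (2 * γ ^ 2)))
      = lam * (Real.exp (2 * ν + 2 * γ ^ 2) - 2 * Real.exp (ν + γ ^ 2 / 2) + 1) := by
  set k : ℝ → ℝ := fun y => lam / (Real.sqrt (2 * Real.pi) * γ) * Real.exp (-(y - ν) ^ 2 / (2 * γ ^ 2)) with hk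
  have h2 := mgf_key lam γ ν 2 hγ
  have h1 := mgf_key lam γ ν 1 hγ
  have h0 := mgf_key lam γ ν 0 hγ
  have hfun : (fun y : ℝ => (Real.exp y - 1) ^ 2 * k y)
      = fun y => (Real.exp (2 * y) * k y - 2 * (Real.exp (1 * y) * k y)) + Real.exp (0 * y) * k y := by
    funext y
    have e2 : Real.exp (2 * y) = Real.exp y * Real.exp y := by
      rw [two_mul, Real.exp_add]
    rw [e2, one_mul, zero_mul, Real.exp_zero]
    ring
  constructor
  · rw [hfun]
    exact (h2.1.sub (h1.1.const_mul 2)).add h0.1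
  · have hi21 : Integrable (fun y : ℝ => Real.exp (2 * y) * k y - 2 * (Real.exp (1 * y) * k y)) :=
      h2.1.sub (h1.1.const_mul 2)
    rw [hfun, integral_add hi21 h0.1, integral_sub h2.1 (h1.1.const_mul 2),
      integral_const_mul, h2.2, h1.2, h0.2]
    norm_num
    rw [show (2:ℝ) * ν + 4 * γ ^ 2 / 2 = 2 * ν + 2 * γ ^ 2 by ring]
    ring

lemma quad_hasDeriv (p q c x : ℝ) : HasDerivAt (fun x : ℝ => p * x ^ 2 + q * x + c) (2 * p * x + q) x := by
  have h := (((hasDerivAt_pow 2 x).const_mul p).add ((hasDerivAt_id x).const_mul q)).add_const c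
  refine h.congr_deriv ?_
  rw [show (2:ℕ) - 1 = 1 from rfl]
  push_cast
  ring

lemma deriv_quad (p q c : ℝ) : deriv (fun x : ℝ => p * x ^ 2 + q * x + c) = fun x => 2 * p * x + q := by
  funext x; exact (quad_hasDeriv p q c x).deriv

lemma lin_hasDeriv (p q x : ℝ) : HasDerivAt (fun x : ℝ => p * x + q) p x := by
  simpa using ((hasDerivAt_id x).const_mul p).add_const q

lemma deriv_lin (p q : ℝ) : deriv (fun x : ℝ => p * x + q) = fun _ => p := by
  funext x; exact (lin_hasDeriv p q x).deriv

/-- The claimed analytic solution for the polynomial option with payoff (s₁+s₂)²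
    solves the two-asset pricing PIDE under the Merton jump-diffusion model with
    independent jump components, and matches the terminal condition. -/
theorem stmt_9 (σ₁ σ₂ : ℝ) (hσ₁ : 0 < σ₁) (hσ₂ : 0 < σ₂) (r ρ T : ℝ)
    (lam₁ lam₂ γ₁ γ₂ ν₁ ν₂ : ℝ)
    (hlam₁ : 0 < lam₁) (hlam₂ : 0 < lam₂) (hγ₁ : 0 < γ₁) (hγ₂ : 0 < γ₂) :
    let k₁ : ℝ → ℝ := fun y =>
      lam₁ / (Real.sqrt (2 * Real.pi) * γ₁) * Real.exp (-(y - ν₁) ^ 2 / (2 * γ₁ ^ 2))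
    let k₂ : ℝ → ℝ := fun y =>
      lam₂ / (Real.sqrt (2 * Real.pi) * γ₂) * Real.exp (-(y - ν₂) ^ 2 / (2 * γ₂ ^ 2))
    let Λ₁ : ℝ := lam₁ * (Real.exp (2 * ν₁ + 2 * γ₁ ^ 2) - 2 * Real.exp (ν₁ + γ₁ ^ 2 / 2) + 1)
    let Λ₂ : ℝ := lam₂ * (Real.exp (2 * ν₂ + 2 * γ₂ ^ 2) - 2 * Real.exp (ν₂ + γ₂ ^ 2 / 2) + 1)
    let V : ℝ → ℝ → ℝ → ℝ := fun t s₁ s₂ =>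
      s₁ ^ 2 * Real.exp ((r + σ₁ ^ 2 + Λ₁) * (T - t)) +
      s₂ ^ 2 * Real.exp ((r + σ₂ ^ 2 + Λ₂) * (T - t)) +
      2 * s₁ * s₂ * Real.exp ((r + ρ * σ₁ * σ₂) * (T - t))
    ∀ t s₁ s₂ : ℝ,
      Integrable (fun y : ℝ =>
        (V t (s₁ * Real.exp y) s₂ - V t s₁ s₂ -
          s₁ * (Real.exp y - 1) * deriv (fun a => V t a s₂) s₁) * k₁ y) ∧
      Integrable (fun y : ℝ =>
        (V t s₁ (s₂ * Real.exp y) - V t s₁ s₂ -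
          s₂ * (Real.exp y - 1) * deriv (fun b => V t s₁ b) s₂) * k₂ y) ∧
      (deriv (fun t' => V t' s₁ s₂) t
        + r * s₁ * deriv (fun a => V t a s₂) s₁
        + r * s₂ * deriv (fun b => V t s₁ b) s₂
        - r * V t s₁ s₂
        + (1 / 2) * σ₁ ^ 2 * s₁ ^ 2 * deriv (deriv (fun a => V t a s₂)) s₁
        + ρ * σ₁ * σ₂ * s₁ * s₂ * deriv (fun a => deriv (fun b => V t a b) s₂) s₁
        + (1 / 2) * σ₂ ^ 2 * s₂ ^ 2 * deriv (deriv (fun b => V t s₁ b)) s₂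
        + (∫ y : ℝ,
            (V t (s₁ * Real.exp y) s₂ - V t s₁ s₂ -
              s₁ * (Real.exp y - 1) * deriv (fun a => V t a s₂) s₁) * k₁ y)
        + (∫ y : ℝ,
            (V t s₁ (s₂ * Real.exp y) - V t s₁ s₂ -
              s₂ * (Real.exp y - 1) * deriv (fun b => V t s₁ b) s₂) * k₂ y) = 0) ∧
      V T s₁ s₂ = (s₁ + s₂) ^ 2 := by
  intro k₁ k₂ Λ₁ Λ₂ V t s₁ s₂
  have hJ1 := jump_key lam₁ γ₁ ν₁ hlam₁ hγ₁
  have hJ2 := jump_key lam₂ γ₂ ν₂ hlam₂ hγ₂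
  set A := Real.exp ((r + σ₁ ^ 2 + Λ₁) * (T - t)) with hA
  set B := Real.exp ((r + σ₂ ^ 2 + Λ₂) * (T - t)) with hB
  set C := Real.exp ((r + ρ * σ₁ * σ₂) * (T - t)) with hC
  have hVa : ∀ s₂' : ℝ, (fun a => V t a s₂') = fun a => A * a ^ 2 + (2 * s₂' * C) * a + s₂' ^ 2 * B := by
    intro s₂'; funext a; simp only [V]; ring
  have hd1 : deriv (fun a => V t a s₂) s₁ = 2 * A * s₁ + 2 * s₂ * C := by
    rw [hVa s₂, deriv_quad]
  have hVb : (fun b => V t s₁ b) = fun b => B * b ^ 2 + (2 * s₁ * C) * b + s₁ ^ 2 * A := by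
    funext b; simp only [V]; ring
  have hd2 : deriv (fun b => V t s₁ b) s₂ = 2 * B * s₂ + 2 * s₁ * C := by
    rw [hVb, deriv_quad]
  have hdd1 : deriv (deriv (fun a => V t a s₂)) s₁ = 2 * A := by
    rw [hVa s₂, deriv_quad, deriv_lin]
  have hdd2 : deriv (deriv (fun b => V t s₁ b)) s₂ = 2 * B := by
    rw [hVb, deriv_quad, deriv_lin]
  have hcross : deriv (fun a => deriv (fun b => V t a b) s₂) s₁ = 2 * C := by
    have hin : (fun a => deriv (fun b => V t a b) s₂) = fun a => (2 * C) * a + 2 * B * s₂ := by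
      funext a
      rw [show (fun b => V t a b) = fun b => B * b ^ 2 + (2 * a * C) * b + a ^ 2 * A by
        funext b; simp only [V]; ring, deriv_quad]
      ring
    rw [hin, deriv_lin]
  have ht : deriv (fun t' => V t' s₁ s₂) t
      = s₁ ^ 2 * (A * -(r + σ₁ ^ 2 + Λ₁)) + s₂ ^ 2 * (B * -(r + σ₂ ^ 2 + Λ₂))
        + 2 * s₁ * s₂ * (C * -(r + ρ * σ₁ * σ₂)) := by
    have e : ∀ κ : ℝ, HasDerivAt (fun t' : ℝ => Real.exp (κ * (T - t')))
        (Real.exp (κ * (T - t)) * -κ) t := by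
      intro κ
      have hg : HasDerivAt (fun t' : ℝ => κ * (T - t')) (-κ) t := by
        simpa using ((hasDerivAt_id t).const_sub T).const_mul κ
      exact hg.exp
    have h := (((e (r + σ₁ ^ 2 + Λ₁)).const_mul (s₁ ^ 2)).add
      ((e (r + σ₂ ^ 2 + Λ₂)).const_mul (s₂ ^ 2))).add
      ((e (r + ρ * σ₁ * σ₂)).const_mul (2 * s₁ * s₂))
    exact h.deriv
  have hfun1 : (fun y : ℝ => (V t (s₁ * Real.exp y) s₂ - V t s₁ s₂ -
        s₁ * (Real.exp y - 1) * deriv (fun a => V t a s₂) s₁) * k₁ y)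
      = fun y => (s₁ ^ 2 * A) * ((Real.exp y - 1) ^ 2 *
          (lam₁ / (Real.sqrt (2 * Real.pi) * γ₁) * Real.exp (-(y - ν₁) ^ 2 / (2 * γ₁ ^ 2)))) := by
    funext y; rw [hd1]; simp only [V, k₁]; ring
  have hfun2 : (fun y : ℝ => (V t s₁ (s₂ * Real.exp y) - V t s₁ s₂ -
        s₂ * (Real.exp y - 1) * deriv (fun b => V t s₁ b) s₂) * k₂ y)
      = fun y => (s₂ ^ 2 * B) * ((Real.exp y - 1) ^ 2 *
          (lam₂ / (Real.sqrt (2 * Real.pi) * γ₂) * Real.exp (-(y - ν₂) ^ 2 / (2 * γ₂ ^ 2)))) := by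
    funext y; rw [hd2]; simp only [V, k₂]; ring
  refine ⟨?_, ?_, ?_, ?_⟩
  · rw [hfun1]; exact hJ1.1.const_mul _
  · rw [hfun2]; exact hJ2.1.const_mul _
  · rw [hfun1, hfun2, integral_const_mul, integral_const_mul, hJ1.2, hJ2.2,
      hd1, hd2, hdd1, hdd2, hcross, ht]
    simp only [V]
    rw [← hA, ← hB, ← hC,
      show lam₁ * (Real.exp (2 * ν₁ + 2 * γ₁ ^ 2) - 2 * Real.exp (ν₁ + γ₁ ^ 2 / 2) + 1) = Λ₁ from rfl,
      show lam₂ * (Real.exp (2 * ν₂ + 2 * γ₂ ^ 2) - 2 * Real.exp (ν₂ + γ₂ ^ 2 / 2) + 1) = Λ₂ from rfl]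
    ring
  · simp only [V, sub_self, mul_zero, Real.exp_zero, mul_one]
    ring
end

section
/- Let a < b, set h = b − a and m = (a + b)/2, and let f : ℝ → ℝ be three times continuously differentiable on [a, b]. Then |(f(b) − f(a))/h − f'(m)|² ≤ (h³/4) ∫_a^b f'''(ξ)² dξ and |(f(a) + f(b))/2 − f(m)|² ≤ (h³/4) ∫_a^b f''(ξ)² dξ. -/
open MeasureTheory intervalIntegral Set

/-- Cauchy–Schwarz for interval integrals of continuous functions. -/
lemma cs_aux (a b : ℝ) (hab : a ≤ b) (K g : ℝ → ℝ)
    (hK : ContinuousOn K (Set.Icc a b)) (hg : ContinuousOn g (Set.Icc a b)) :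
    (∫ t in a..b, K t * g t) ^ 2 ≤ (∫ t in a..b, K t ^ 2) * (∫ t in a..b, g t ^ 2) := by
  have huIcc : Set.uIcc a b = Set.Icc a b := Set.uIcc_of_le hab
  have hK2 : IntervalIntegrable (fun t => K t ^ 2) volume a b := by
    apply ContinuousOn.intervalIntegrable; rw [huIcc]; exact hK.pow 2
  have hg2 : IntervalIntegrable (fun t => g t ^ 2) volume a b := by
    apply ContinuousOn.intervalIntegrable; rw [huIcc]; exact hg.pow 2
  have hKg : IntervalIntegrable (fun t => K t * g t) volume a b := by
    apply ContinuousOn.intervalIntegrable; rw [huIcc]; exact hK.mul hg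
  set A := ∫ t in a..b, K t ^ 2 with hA
  set B := ∫ t in a..b, K t * g t with hB
  set C := ∫ t in a..b, g t ^ 2 with hC
  have key : ∀ x : ℝ, 0 ≤ A * (x * x) + (2 * B) * x + C := by
    intro x
    have h0 : 0 ≤ ∫ t in a..b, (x * K t + g t) ^ 2 :=
      intervalIntegral.integral_nonneg hab (fun t _ => sq_nonneg _)
    have hexp : (∫ t in a..b, (x * K t + g t) ^ 2)
        = x ^ 2 * A + (2 * x) * B + C := by
      rw [hA, hB, hC]
      have h1 : ∀ t : ℝ, (x * K t + g t) ^ 2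
          = x ^ 2 * K t ^ 2 + (2 * x) * (K t * g t) + g t ^ 2 := fun t => by ring
      rw [intervalIntegral.integral_congr (g := fun t => x ^ 2 * K t ^ 2 + (2 * x) * (K t * g t) + g t ^ 2) (fun t _ => h1 t)]
      rw [intervalIntegral.integral_add ((hK2.const_mul _).add (hKg.const_mul _)) hg2,
        intervalIntegral.integral_add (hK2.const_mul _) (hKg.const_mul _),
        intervalIntegral.integral_const_mul, intervalIntegral.integral_const_mul]
    rw [hexp] at h0; nlinarith [h0]
  have hd := discrim_le_zero key
  simp only [discrim] at hd
  nlinarith [hd]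

lemma taylor2 (c d : ℝ) (hcd : c ≤ d) (u u' u'' : ℝ → ℝ)
    (hu : ∀ x ∈ Set.Ioo c d, HasDerivAt u (u' x) x)
    (hu' : ∀ x ∈ Set.Ioo c d, HasDerivAt u' (u'' x) x)
    (hcu : ContinuousOn u (Set.Icc c d)) (hcu' : ContinuousOn u' (Set.Icc c d))
    (hcu'' : ContinuousOn u'' (Set.Icc c d)) :
    ∫ t in c..d, (d - t) * u'' t = u d - u c - (d - c) * u' c := by
  have hG : ∀ x ∈ Set.Ioo c d, HasDerivAt (fun t => u t + (d - t) * u' t)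
      ((d - x) * u'' x) x := by
    intro x hx
    have h1 : HasDerivAt (fun t : ℝ => d - t) (-1) x := by
      simpa using (hasDerivAt_id x).const_sub d
    have h3 := (hu x hx).add (h1.mul (hu' x hx))
    refine h3.congr_deriv ?_; ring
  have hGc : ContinuousOn (fun t => u t + (d - t) * u' t) (Set.Icc c d) :=
    hcu.add ((continuousOn_const.sub continuousOn_id).mul hcu')
  have hint : IntervalIntegrable (fun t => (d - t) * u'' t) volume c d := by
    apply ContinuousOn.intervalIntegrable
    rw [Set.uIcc_of_le hcd]
    exact (continuousOn_const.sub continuousOn_id).mul hcu''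
  have h := intervalIntegral.integral_eq_sub_of_hasDeriv_right_of_le hcd hGc
    (fun x hx => (hG x hx).hasDerivWithinAt) hint
  rw [h]; ring

lemma taylor2' (c d : ℝ) (hcd : c ≤ d) (u u' u'' : ℝ → ℝ)
    (hu : ∀ x ∈ Set.Ioo c d, HasDerivAt u (u' x) x)
    (hu' : ∀ x ∈ Set.Ioo c d, HasDerivAt u' (u'' x) x)
    (hcu : ContinuousOn u (Set.Icc c d)) (hcu' : ContinuousOn u' (Set.Icc c d))
    (hcu'' : ContinuousOn u'' (Set.Icc c d)) :
    ∫ t in c..d, (t - c) * u'' t = u c - u d + (d - c) * u' d := by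
  have hG : ∀ x ∈ Set.Ioo c d, HasDerivAt (fun t => (t - c) * u' t - u t)
      ((x - c) * u'' x) x := by
    intro x hx
    have h1 : HasDerivAt (fun t : ℝ => t - c) 1 x := by
      simpa using (hasDerivAt_id x).sub_const c
    have h3 := (h1.mul (hu' x hx)).sub (hu x hx)
    refine h3.congr_deriv ?_; ring
  have hGc : ContinuousOn (fun t => (t - c) * u' t - u t) (Set.Icc c d) :=
    ((continuousOn_id.sub continuousOn_const).mul hcu').sub hcu
  have hint : IntervalIntegrable (fun t => (t - c) * u'' t) volume c d := by
    apply ContinuousOn.intervalIntegrable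
    rw [Set.uIcc_of_le hcd]
    exact (continuousOn_id.sub continuousOn_const).mul hcu''
  have h := intervalIntegral.integral_eq_sub_of_hasDeriv_right_of_le hcd hGc
    (fun x hx => (hG x hx).hasDerivWithinAt) hint
  rw [h]; ring

lemma taylor3 (c d : ℝ) (hcd : c ≤ d) (u u' u'' u''' : ℝ → ℝ)
    (hu : ∀ x ∈ Set.Ioo c d, HasDerivAt u (u' x) x)
    (hu' : ∀ x ∈ Set.Ioo c d, HasDerivAt u' (u'' x) x)
    (hu'' : ∀ x ∈ Set.Ioo c d, HasDerivAt u'' (u''' x) x)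
    (hcu : ContinuousOn u (Set.Icc c d)) (hcu' : ContinuousOn u' (Set.Icc c d))
    (hcu'' : ContinuousOn u'' (Set.Icc c d)) (hcu''' : ContinuousOn u''' (Set.Icc c d)) :
    ∫ t in c..d, (d - t) ^ 2 / 2 * u''' t
      = u d - u c - (d - c) * u' c - (d - c) ^ 2 / 2 * u'' c := by
  have hG : ∀ x ∈ Set.Ioo c d,
      HasDerivAt (fun t => u t + (d - t) * u' t + (d - t) ^ 2 / 2 * u'' t)
        ((d - x) ^ 2 / 2 * u''' x) x := by
    intro x hx
    have h1 : HasDerivAt (fun t : ℝ => d - t) (-1) x := by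
      simpa using (hasDerivAt_id x).const_sub d
    have h3 := ((hu x hx).add (h1.mul (hu' x hx))).add
      (((h1.pow 2).div_const 2).mul (hu'' x hx))
    refine h3.congr_deriv ?_
    push_cast [Pi.pow_apply]
    ring
  have hGc : ContinuousOn (fun t => u t + (d - t) * u' t + (d - t) ^ 2 / 2 * u'' t)
      (Set.Icc c d) :=
    (hcu.add ((continuousOn_const.sub continuousOn_id).mul hcu')).add
      ((((continuousOn_const.sub continuousOn_id).pow 2).div_const 2).mul hcu'')
  have hint : IntervalIntegrable (fun t => (d - t) ^ 2 / 2 * u''' t) volume c d := by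
    apply ContinuousOn.intervalIntegrable
    rw [Set.uIcc_of_le hcd]
    exact (((continuousOn_const.sub continuousOn_id).pow 2).div_const 2).mul hcu'''
  have h := intervalIntegral.integral_eq_sub_of_hasDeriv_right_of_le hcd hGc
    (fun x hx => (hG x hx).hasDerivWithinAt) hint
  rw [h]; ring

lemma taylor3' (c d : ℝ) (hcd : c ≤ d) (u u' u'' u''' : ℝ → ℝ)
    (hu : ∀ x ∈ Set.Ioo c d, HasDerivAt u (u' x) x)
    (hu' : ∀ x ∈ Set.Ioo c d, HasDerivAt u' (u'' x) x)
    (hu'' : ∀ x ∈ Set.Ioo c d, HasDerivAt u'' (u''' x) x)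
    (hcu : ContinuousOn u (Set.Icc c d)) (hcu' : ContinuousOn u' (Set.Icc c d))
    (hcu'' : ContinuousOn u'' (Set.Icc c d)) (hcu''' : ContinuousOn u''' (Set.Icc c d)) :
    ∫ t in c..d, (t - c) ^ 2 / 2 * u''' t
      = u d - u c - (d - c) * u' d + (d - c) ^ 2 / 2 * u'' d := by
  have hG : ∀ x ∈ Set.Ioo c d,
      HasDerivAt (fun t => u t - (t - c) * u' t + (t - c) ^ 2 / 2 * u'' t)
        ((x - c) ^ 2 / 2 * u''' x) x := by
    intro x hx
    have h1 : HasDerivAt (fun t : ℝ => t - c) 1 x := by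
      simpa using (hasDerivAt_id x).sub_const c
    have h3 := ((hu x hx).sub (h1.mul (hu' x hx))).add
      (((h1.pow 2).div_const 2).mul (hu'' x hx))
    refine h3.congr_deriv ?_
    push_cast [Pi.pow_apply]
    ring
  have hGc : ContinuousOn (fun t => u t - (t - c) * u' t + (t - c) ^ 2 / 2 * u'' t)
      (Set.Icc c d) :=
    (hcu.sub ((continuousOn_id.sub continuousOn_const).mul hcu')).add
      ((((continuousOn_id.sub continuousOn_const).pow 2).div_const 2).mul hcu'')
  have hint : IntervalIntegrable (fun t => (t - c) ^ 2 / 2 * u''' t) volume c d := by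
    apply ContinuousOn.intervalIntegrable
    rw [Set.uIcc_of_le hcd]
    exact (((continuousOn_id.sub continuousOn_const).pow 2).div_const 2).mul hcu'''
  have h := intervalIntegral.integral_eq_sub_of_hasDeriv_right_of_le hcd hGc
    (fun x hx => (hG x hx).hasDerivWithinAt) hint
  rw [h]; ring

/-- Cauchy–Schwarz bounds on the midpoint Taylor remainders of the Crank–Nicolson
    scheme: |(f(b)−f(a))/h − f'(m)|² ≤ (h³/4)∫_a^b f'''² and
    |(f(a)+f(b))/2 − f(m)|² ≤ (h³/4)∫_a^b f''². -/
theorem stmt_13 (a b h m : ℝ) (hab : a < b) (hh : h = b - a) (hm : m = (a + b) / 2)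
    (f f' f'' f''' : ℝ → ℝ)
    (hf : ∀ x ∈ Set.Icc a b, HasDerivWithinAt f (f' x) (Set.Icc a b) x)
    (hf' : ∀ x ∈ Set.Icc a b, HasDerivWithinAt f' (f'' x) (Set.Icc a b) x)
    (hf'' : ∀ x ∈ Set.Icc a b, HasDerivWithinAt f'' (f''' x) (Set.Icc a b) x)
    (hcont : ContinuousOn f''' (Set.Icc a b)) :
    |(f b - f a) / h - f' m| ^ 2 ≤ (h ^ 3 / 4) * ∫ ξ in a..b, (f''' ξ) ^ 2 ∧
    |(f a + f b) / 2 - f m| ^ 2 ≤ (h ^ 3 / 4) * ∫ ξ in a..b, (f'' ξ) ^ 2 := by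
  have hh0 : 0 < h := by rw [hh]; linarith
  have ham : a ≤ m := by rw [hm]; linarith
  have hmb : m ≤ b := by rw [hm]; linarith
  have e1 : b - m = h / 2 := by rw [hm, hh]; ring
  have e2 : m - a = h / 2 := by rw [hm, hh]; ring
  have hIab : Set.Icc m b ⊆ Set.Icc a b := Set.Icc_subset_Icc ham le_rfl
  have hIam : Set.Icc a m ⊆ Set.Icc a b := Set.Icc_subset_Icc le_rfl hmb
  have hOmb : Set.Ioo m b ⊆ Set.Ioo a b := Set.Ioo_subset_Ioo ham le_rfl
  have hOam : Set.Ioo a m ⊆ Set.Ioo a b := Set.Ioo_subset_Ioo le_rfl hmb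
  have hfc : ContinuousOn f (Set.Icc a b) := fun x hx => (hf x hx).continuousWithinAt
  have hf'c : ContinuousOn f' (Set.Icc a b) := fun x hx => (hf' x hx).continuousWithinAt
  have hf''c : ContinuousOn f'' (Set.Icc a b) := fun x hx => (hf'' x hx).continuousWithinAt
  have hmemN : ∀ x ∈ Set.Ioo a b, Set.Icc a b ∈ nhds x :=
    fun x hx => Icc_mem_nhds hx.1 hx.2
  have hfD : ∀ x ∈ Set.Ioo a b, HasDerivAt f (f' x) x :=
    fun x hx => (hf x (Set.mem_Icc_of_Ioo hx)).hasDerivAt (hmemN x hx)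
  have hf'D : ∀ x ∈ Set.Ioo a b, HasDerivAt f' (f'' x) x :=
    fun x hx => (hf' x (Set.mem_Icc_of_Ioo hx)).hasDerivAt (hmemN x hx)
  have hf''D : ∀ x ∈ Set.Ioo a b, HasDerivAt f'' (f''' x) x :=
    fun x hx => (hf'' x (Set.mem_Icc_of_Ioo hx)).hasDerivAt (hmemN x hx)
  -- Taylor identities
  have k3b := taylor3 m b hmb f f' f'' f''' (fun x hx => hfD x (hOmb hx))
    (fun x hx => hf'D x (hOmb hx)) (fun x hx => hf''D x (hOmb hx))
    (hfc.mono hIab) (hf'c.mono hIab) (hf''c.mono hIab) (hcont.mono hIab)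
  have k3a := taylor3' a m ham f f' f'' f''' (fun x hx => hfD x (hOam hx))
    (fun x hx => hf'D x (hOam hx)) (fun x hx => hf''D x (hOam hx))
    (hfc.mono hIam) (hf'c.mono hIam) (hf''c.mono hIam) (hcont.mono hIam)
  have k2b := taylor2 m b hmb f f' f'' (fun x hx => hfD x (hOmb hx))
    (fun x hx => hf'D x (hOmb hx)) (hfc.mono hIab) (hf'c.mono hIab) (hf''c.mono hIab)
  have k2a := taylor2' a m ham f f' f'' (fun x hx => hfD x (hOam hx))
    (fun x hx => hf'D x (hOam hx)) (hfc.mono hIam) (hf'c.mono hIam) (hf''c.mono hIam)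
  -- weight integrals
  have w3b : (∫ t in m..b, ((b - t) ^ 2 / 2) ^ 2) = (h / 2) ^ 5 / 20 := by
    have h1 : (∫ t in m..b, ((b - t) ^ 2 / 2) ^ 2)
        = ∫ t in m..b, (fun y : ℝ => (y ^ 2 / 2) ^ 2) (b - t) := rfl
    rw [h1, intervalIntegral.integral_comp_sub_left (fun y : ℝ => (y ^ 2 / 2) ^ 2) b,
      sub_self, e1]
    have h2 : ∀ x : ℝ, (x ^ 2 / 2) ^ 2 = x ^ 4 / 4 := fun x => by ring
    simp_rw [h2]
    rw [intervalIntegral.integral_div, integral_pow]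
    norm_num
    ring
  have w3a : (∫ t in a..m, ((t - a) ^ 2 / 2) ^ 2) = (h / 2) ^ 5 / 20 := by
    have h1 : (∫ t in a..m, ((t - a) ^ 2 / 2) ^ 2)
        = ∫ t in a..m, (fun y : ℝ => (y ^ 2 / 2) ^ 2) (t - a) := rfl
    rw [h1, intervalIntegral.integral_comp_sub_right (fun y : ℝ => (y ^ 2 / 2) ^ 2) a,
      sub_self, e2]
    have h2 : ∀ x : ℝ, (x ^ 2 / 2) ^ 2 = x ^ 4 / 4 := fun x => by ring
    simp_rw [h2]
    rw [intervalIntegral.integral_div, integral_pow]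
    norm_num
    ring
  have w2b : (∫ t in m..b, (b - t) ^ 2) = (h / 2) ^ 3 / 3 := by
    have h1 : (∫ t in m..b, (b - t) ^ 2)
        = ∫ t in m..b, (fun y : ℝ => y ^ 2) (b - t) := rfl
    rw [h1, intervalIntegral.integral_comp_sub_left (fun y : ℝ => y ^ 2) b, sub_self, e1,
      integral_pow]
    norm_num
  have w2a : (∫ t in a..m, (t - a) ^ 2) = (h / 2) ^ 3 / 3 := by
    have h1 : (∫ t in a..m, (t - a) ^ 2)
        = ∫ t in a..m, (fun y : ℝ => y ^ 2) (t - a) := rfl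
    rw [h1, intervalIntegral.integral_comp_sub_right (fun y : ℝ => y ^ 2) a, sub_self, e2,
      integral_pow]
    norm_num
  -- Cauchy–Schwarz
  have c3b : (∫ t in m..b, (b - t) ^ 2 / 2 * f''' t) ^ 2
      ≤ (∫ t in m..b, ((b - t) ^ 2 / 2) ^ 2) * ∫ t in m..b, f''' t ^ 2 :=
    cs_aux m b hmb _ f'''
      (((continuousOn_const.sub continuousOn_id).pow 2).div_const 2) (hcont.mono hIab)
  have c3a : (∫ t in a..m, (t - a) ^ 2 / 2 * f''' t) ^ 2
      ≤ (∫ t in a..m, ((t - a) ^ 2 / 2) ^ 2) * ∫ t in a..m, f''' t ^ 2 :=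
    cs_aux a m ham _ f'''
      (((continuousOn_id.sub continuousOn_const).pow 2).div_const 2) (hcont.mono hIam)
  have c2b : (∫ t in m..b, (b - t) * f'' t) ^ 2
      ≤ (∫ t in m..b, (b - t) ^ 2) * ∫ t in m..b, f'' t ^ 2 := by
    have := cs_aux m b hmb (fun t => b - t) f''
      (continuousOn_const.sub continuousOn_id) (hf''c.mono hIab)
    simpa using this
  have c2a : (∫ t in a..m, (t - a) * f'' t) ^ 2
      ≤ (∫ t in a..m, (t - a) ^ 2) * ∫ t in a..m, f'' t ^ 2 := by
    have := cs_aux a m ham (fun t => t - a) f''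
      (continuousOn_id.sub continuousOn_const) (hf''c.mono hIam)
    simpa using this
  rw [w3b] at c3b; rw [w3a] at c3a; rw [w2b] at c2b; rw [w2a] at c2a
  -- splitting the squared-derivative integrals
  have i3a : IntervalIntegrable (fun t => f''' t ^ 2) MeasureTheory.volume a m := by
    apply ContinuousOn.intervalIntegrable
    rw [Set.uIcc_of_le ham]; exact (hcont.mono hIam).pow 2
  have i3b : IntervalIntegrable (fun t => f''' t ^ 2) MeasureTheory.volume m b := by
    apply ContinuousOn.intervalIntegrable
    rw [Set.uIcc_of_le hmb]; exact (hcont.mono hIab).pow 2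
  have i2a : IntervalIntegrable (fun t => f'' t ^ 2) MeasureTheory.volume a m := by
    apply ContinuousOn.intervalIntegrable
    rw [Set.uIcc_of_le ham]; exact (hf''c.mono hIam).pow 2
  have i2b : IntervalIntegrable (fun t => f'' t ^ 2) MeasureTheory.volume m b := by
    apply ContinuousOn.intervalIntegrable
    rw [Set.uIcc_of_le hmb]; exact (hf''c.mono hIab).pow 2
  have Jsplit3 : (∫ t in a..m, f''' t ^ 2) + (∫ t in m..b, f''' t ^ 2)
      = ∫ ξ in a..b, f''' ξ ^ 2 := intervalIntegral.integral_add_adjacent_intervals i3a i3b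
  have Jsplit2 : (∫ t in a..m, f'' t ^ 2) + (∫ t in m..b, f'' t ^ 2)
      = ∫ ξ in a..b, f'' ξ ^ 2 := intervalIntegral.integral_add_adjacent_intervals i2a i2b
  have J3a0 : 0 ≤ ∫ t in a..m, f''' t ^ 2 :=
    intervalIntegral.integral_nonneg ham fun t _ => sq_nonneg _
  have J3b0 : 0 ≤ ∫ t in m..b, f''' t ^ 2 :=
    intervalIntegral.integral_nonneg hmb fun t _ => sq_nonneg _
  have J2a0 : 0 ≤ ∫ t in a..m, f'' t ^ 2 :=
    intervalIntegral.integral_nonneg ham fun t _ => sq_nonneg _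
  have J2b0 : 0 ≤ ∫ t in m..b, f'' t ^ 2 :=
    intervalIntegral.integral_nonneg hmb fun t _ => sq_nonneg _
  constructor
  · -- first bound
    have hr1 : (f b - f a) / h - f' m
        = ((∫ t in a..m, (t - a) ^ 2 / 2 * f''' t)
          + (∫ t in m..b, (b - t) ^ 2 / 2 * f''' t)) / h := by
      rw [k3a, k3b, e1, e2]; field_simp; ring
    rw [hr1, sq_abs, ← Jsplit3, div_pow, div_le_iff₀ (by positivity : (0:ℝ) < h ^ 2)]
    have s1 := sq_nonneg ((∫ t in a..m, (t - a) ^ 2 / 2 * f''' t)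
      - (∫ t in m..b, (b - t) ^ 2 / 2 * f''' t))
    have s3 : 0 ≤ h ^ 5 * ((∫ t in a..m, f''' t ^ 2) + (∫ t in m..b, f''' t ^ 2)) :=
      mul_nonneg (pow_nonneg hh0.le 5) (add_nonneg J3a0 J3b0)
    linarith [c3a, c3b, s1, s3]
  · -- second bound
    have hr2 : (f a + f b) / 2 - f m
        = ((∫ t in a..m, (t - a) * f'' t) + (∫ t in m..b, (b - t) * f'' t)) / 2 := by
      rw [k2a, k2b, e1, e2]; ring
    rw [hr2, sq_abs, ← Jsplit2, div_pow, div_le_iff₀ (by norm_num : (0:ℝ) < 2 ^ 2)]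
    have s1 := sq_nonneg ((∫ t in a..m, (t - a) * f'' t) - (∫ t in m..b, (b - t) * f'' t))
    have s3 : 0 ≤ h ^ 3 * ((∫ t in a..m, f'' t ^ 2) + (∫ t in m..b, f'' t ^ 2)) :=
      mul_nonneg (pow_nonneg hh0.le 3) (add_nonneg J2a0 J2b0)
    linarith [c2a, c2b, s1, s3]
end

section
/- Let k : ℝ → ℝ be nonnegative and measurable with ∫_ℝ (1 + |y|) k(y) dy < ∞, and define K(z) = ∫_z^∞ k(y) dy for z > 0 and K(z) = −∫_{−∞}^z k(y) dy for z < 0. Let f : ℝ → ℝ be continuously differentiable with bounded derivative. Then for every x ∈ ℝ, the functions y ↦ (f(x+y) − f(x)) k(y) and z ↦ f'(x+z) K(z) are integrable on ℝ and ∫_ℝ (f(x+y) − f(x)) k(y) dy = ∫_ℝ f'(x+z) K(z) dz. -/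
open MeasureTheory

/-- Rewriting the jump difference in terms of the signed tail function K of the
    Lévy density k: ∫ (f(x+y) − f(x)) k(y) dy = ∫ f'(x+z) K(z) dz, with both
    integrands integrable. -/
theorem stmt_16 (k : ℝ → ℝ) (hk_nonneg : ∀ y, 0 ≤ k y) (hk_meas : Measurable k)
    (hk_int : Integrable (fun y : ℝ => (1 + |y|) * k y))
    (Kf : ℝ → ℝ)
    (hKpos : ∀ z : ℝ, 0 < z → Kf z = ∫ y in Set.Ioi z, k y)
    (hKneg : ∀ z : ℝ, z < 0 → Kf z = -∫ y in Set.Iio z, k y)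
    (f f' : ℝ → ℝ)
    (hf : ∀ x, HasDerivAt f (f' x) x)
    (hf'cont : Continuous f')
    (hf'bdd : ∃ M : ℝ, ∀ x, |f' x| ≤ M)
    (x : ℝ) :
    Integrable (fun y : ℝ => (f (x + y) - f x) * k y) ∧
    Integrable (fun z : ℝ => f' (x + z) * Kf z) ∧
    ∫ y : ℝ, (f (x + y) - f x) * k y = ∫ z : ℝ, f' (x + z) * Kf z := by
  obtain ⟨M, hM⟩ := hf'bdd
  have hM0 : (0:ℝ) ≤ M := (abs_nonneg _).trans (hM 0)
  have hfc : Continuous f := by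
    rw [continuous_iff_continuousAt]; exact fun a => (hf a).continuousAt
  have hcont' : Continuous (fun z : ℝ => f' (x + z)) :=
    hf'cont.comp (continuous_const.add continuous_id)
  -- FTC
  have hFTC : ∀ y : ℝ, (∫ z in (0:ℝ)..y, f' (x + z)) = f (x + y) - f x := by
    intro y
    have hderiv : ∀ z ∈ Set.uIcc (0:ℝ) y, HasDerivAt (fun t => f (x + t)) (f' (x + z)) z := by
      intro z _
      have := (hf (x + z)).comp z ((hasDerivAt_id z).const_add x)
      simpa [Function.comp_def] using this
    rw [intervalIntegral.integral_eq_sub_of_hasDerivAt hderiv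
      (hcont'.intervalIntegrable 0 y)]
    simp
  have hLip : ∀ y : ℝ, |f (x + y) - f x| ≤ M * |y| := by
    intro y
    rw [← hFTC y]
    have := intervalIntegral.norm_integral_le_of_norm_le_const
      (C := M) (f := fun z => f' (x + z)) (a := 0) (b := y)
      (fun z _ => by simpa using hM (x + z))
    simpa using this
  -- integrability 1
  have hmeas1 : AEStronglyMeasurable (fun y : ℝ => (f (x + y) - f x) * k y) volume :=
    (((hfc.comp (continuous_const.add continuous_id)).sub continuous_const).measurable.mul
      hk_meas).aestronglyMeasurable
  have hint1 : Integrable (fun y : ℝ => (f (x + y) - f x) * k y) := by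
    refine (hk_int.const_mul M).mono' hmeas1 ?_
    filter_upwards with y
    rw [Real.norm_eq_abs, abs_mul, abs_of_nonneg (hk_nonneg y)]
    have h1 : |f (x + y) - f x| * k y ≤ (M * |y|) * k y :=
      mul_le_mul_of_nonneg_right (hLip y) (hk_nonneg y)
    nlinarith [hk_nonneg y, abs_nonneg y]
  -- the product function
  set G : ℝ × ℝ → ℝ := fun p => f' (x + p.2) * k p.1 *
    (if 0 < p.2 ∧ p.2 < p.1 then 1 else if p.1 < p.2 ∧ p.2 < 0 then -1 else 0) with hGdef
  have hGmeas : AEStronglyMeasurable G (volume.prod volume) := by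
    apply Measurable.aestronglyMeasurable
    refine ((hf'cont.measurable.comp (measurable_const.add measurable_snd)).mul
      (hk_meas.comp measurable_fst)).mul ?_
    refine Measurable.ite ?_ measurable_const (Measurable.ite ?_ measurable_const measurable_const)
    · exact (measurableSet_lt measurable_const measurable_snd).inter
        (measurableSet_lt measurable_snd measurable_fst)
    · exact ((measurableSet_lt measurable_fst measurable_snd).inter
        (measurableSet_lt measurable_snd measurable_const))
  -- decomposition of sections in z
  have hdecomp : ∀ y : ℝ, (fun z => G (y, z)) = fun z =>
      (Set.Ioo (0:ℝ) y).indicator (fun z => f' (x + z) * k y) z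
      - (Set.Ioo y (0:ℝ)).indicator (fun z => f' (x + z) * k y) z := by
    intro y
    funext z
    simp only [hGdef]
    by_cases h1 : 0 < z ∧ z < y
    · have h2 : z ∉ Set.Ioo y (0:ℝ) := fun hm => absurd h1.1 (by linarith [hm.2])
      rw [if_pos h1, Set.indicator_of_mem (Set.mem_Ioo.2 h1) (fun z => f' (x + z) * k y),
        Set.indicator_of_notMem h2, mul_one, sub_zero]
    · by_cases h2 : y < z ∧ z < 0
      · have h1' : z ∉ Set.Ioo (0:ℝ) y := fun hm => absurd h2.2 (by linarith [hm.1])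
        rw [if_neg h1, if_pos h2, Set.indicator_of_notMem h1',
          Set.indicator_of_mem (Set.mem_Ioo.2 h2) (fun z => f' (x + z) * k y), zero_sub]
        ring
      · rw [if_neg h1, if_neg h2, Set.indicator_of_notMem (fun hm => h1 (Set.mem_Ioo.1 hm)),
          Set.indicator_of_notMem (fun hm => h2 (Set.mem_Ioo.1 hm)), mul_zero, sub_zero]
  -- integrability of sections in z
  have hsecInt : ∀ y : ℝ, Integrable (fun z => G (y, z)) := by
    intro y
    rw [hdecomp y]
    have hc : Continuous (fun z : ℝ => f' (x + z) * k y) := hcont'.mul continuous_const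
    have h1 : Integrable ((Set.Ioo (0:ℝ) y).indicator (fun z => f' (x + z) * k y)) := by
      rw [integrable_indicator_iff measurableSet_Ioo]
      exact (hc.continuousOn.integrableOn_compact isCompact_Icc).mono_set Set.Ioo_subset_Icc_self
    have h2 : Integrable ((Set.Ioo y (0:ℝ)).indicator (fun z => f' (x + z) * k y)) := by
      rw [integrable_indicator_iff measurableSet_Ioo]
      exact (hc.continuousOn.integrableOn_compact isCompact_Icc).mono_set Set.Ioo_subset_Icc_self
    exact h1.sub h2
  -- bound on the integral of norms of sections
  have hsecBound : ∀ y : ℝ, (∫ z, ‖G (y, z)‖) ≤ M * ((1 + |y|) * k y) := by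
    intro y
    have hBint1 : Integrable ((Set.Ioo (0:ℝ) y).indicator (fun _ : ℝ => M * k y)) := by
      rw [integrable_indicator_iff measurableSet_Ioo]
      exact integrableOn_const measure_Ioo_lt_top.ne enorm_ne_top
    have hBint2 : Integrable ((Set.Ioo y (0:ℝ)).indicator (fun _ : ℝ => M * k y)) := by
      rw [integrable_indicator_iff measurableSet_Ioo]
      exact integrableOn_const measure_Ioo_lt_top.ne enorm_ne_top
    have hle : ∀ z : ℝ, ‖G (y, z)‖ ≤
        (Set.Ioo (0:ℝ) y).indicator (fun _ => M * k y) z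
        + (Set.Ioo y (0:ℝ)).indicator (fun _ => M * k y) z := by
      intro z
      have hkM : |f' (x + z)| * k y ≤ M * k y :=
        mul_le_mul_of_nonneg_right (hM (x + z)) (hk_nonneg y)
      simp only [hGdef]
      by_cases h1 : 0 < z ∧ z < y
      · have h2 : z ∉ Set.Ioo y (0:ℝ) := fun hm => absurd h1.1 (by linarith [hm.2])
        rw [if_pos h1, Set.indicator_of_mem (Set.mem_Ioo.2 h1) (fun _ => M * k y),
          Set.indicator_of_notMem h2, mul_one, add_zero, Real.norm_eq_abs, abs_mul,
          abs_of_nonneg (hk_nonneg y)]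
        exact hkM
      · by_cases h2 : y < z ∧ z < 0
        · have h1' : z ∉ Set.Ioo (0:ℝ) y := fun hm => absurd h2.2 (by linarith [hm.1])
          rw [if_neg h1, if_pos h2, Set.indicator_of_notMem h1',
            Set.indicator_of_mem (Set.mem_Ioo.2 h2) (fun _ => M * k y), zero_add,
            Real.norm_eq_abs, abs_mul, abs_neg, abs_one, mul_one, abs_mul,
            abs_of_nonneg (hk_nonneg y)]
          exact hkM
        · rw [if_neg h1, if_neg h2, Set.indicator_of_notMem (fun hm => h1 (Set.mem_Ioo.1 hm)),
            Set.indicator_of_notMem (fun hm => h2 (Set.mem_Ioo.1 hm)), mul_zero, norm_zero,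
            add_zero]
    calc (∫ z, ‖G (y, z)‖)
        ≤ ∫ z, ((Set.Ioo (0:ℝ) y).indicator (fun _ => M * k y) z
            + (Set.Ioo y (0:ℝ)).indicator (fun _ => M * k y) z) :=
          integral_mono (hsecInt y).norm (hBint1.add hBint2) hle
      _ = (volume (Set.Ioo (0:ℝ) y)).toReal * (M * k y)
            + (volume (Set.Ioo y (0:ℝ))).toReal * (M * k y) := by
          rw [integral_add hBint1 hBint2, integral_indicator_const _ measurableSet_Ioo,
            integral_indicator_const _ measurableSet_Ioo, smul_eq_mul, smul_eq_mul,
            measureReal_def, measureReal_def]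
      _ ≤ M * ((1 + |y|) * k y) := by
          rcases le_or_gt 0 y with hy | hy
          · rw [Real.volume_Ioo, Real.volume_Ioo,
              ENNReal.toReal_ofReal (by linarith : (0:ℝ) ≤ y - 0),
              ENNReal.ofReal_eq_zero.2 (by linarith : (0:ℝ) - y ≤ 0)]
            simp only [ENNReal.toReal_zero, zero_mul, add_zero, sub_zero]
            have hy1 : y ≤ 1 + |y| := by rw [abs_of_nonneg hy]; linarith
            nlinarith [mul_nonneg hM0 (hk_nonneg y), hk_nonneg y]
          · rw [Real.volume_Ioo, Real.volume_Ioo,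
              ENNReal.toReal_ofReal (by linarith : (0:ℝ) ≤ 0 - y),
              ENNReal.ofReal_eq_zero.2 (by linarith : y - 0 ≤ 0)]
            simp only [ENNReal.toReal_zero, zero_mul, zero_add, zero_sub]
            have hy1 : -y ≤ 1 + |y| := by rw [abs_of_neg hy]; linarith
            nlinarith [mul_nonneg hM0 (hk_nonneg y), hk_nonneg y]
  -- integrability on the product
  have hGint : Integrable G (volume.prod volume) := by
    rw [integrable_prod_iff hGmeas]
    constructor
    · exact Filter.Eventually.of_forall hsecInt
    · refine ((hk_int.const_mul M).mono' (hGmeas.norm.integral_prod_right') ?_)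
      filter_upwards with y
      rw [Real.norm_eq_abs, abs_of_nonneg (integral_nonneg fun z => norm_nonneg _)]
      exact hsecBound y
  -- Fact A : inner integral in z
  have hFactA : ∀ y : ℝ, (∫ z, G (y, z)) = (f (x + y) - f x) * k y := by
    intro y
    have hc : Continuous (fun z : ℝ => f' (x + z) * k y) := hcont'.mul continuous_const
    have h1 : Integrable ((Set.Ioo (0:ℝ) y).indicator (fun z => f' (x + z) * k y)) := by
      rw [integrable_indicator_iff measurableSet_Ioo]
      exact (hc.continuousOn.integrableOn_compact isCompact_Icc).mono_set Set.Ioo_subset_Icc_self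
    have h2 : Integrable ((Set.Ioo y (0:ℝ)).indicator (fun z => f' (x + z) * k y)) := by
      rw [integrable_indicator_iff measurableSet_Ioo]
      exact (hc.continuousOn.integrableOn_compact isCompact_Icc).mono_set Set.Ioo_subset_Icc_self
    rw [hdecomp y, integral_sub h1 h2, integral_indicator measurableSet_Ioo,
      integral_indicator measurableSet_Ioo]
    have key : (∫ z in Set.Ioo (0:ℝ) y, f' (x + z) * k y)
        - (∫ z in Set.Ioo y (0:ℝ), f' (x + z) * k y)
        = ∫ z in (0:ℝ)..y, f' (x + z) * k y := by
      rcases le_or_gt 0 y with hy | hy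
      · have he : Set.Ioo y (0:ℝ) = ∅ := Set.Ioo_eq_empty (not_lt.2 hy)
        rw [he]
        simp only [Measure.restrict_empty, integral_zero_measure, sub_zero]
        rw [intervalIntegral.integral_of_le hy, integral_Ioc_eq_integral_Ioo]
      · have he : Set.Ioo (0:ℝ) y = ∅ := Set.Ioo_eq_empty (not_lt.2 hy.le)
        rw [he]
        simp only [Measure.restrict_empty, integral_zero_measure, zero_sub]
        rw [intervalIntegral.integral_symm, intervalIntegral.integral_of_le hy.le,
          integral_Ioc_eq_integral_Ioo]
    rw [key, intervalIntegral.integral_mul_const, hFTC y]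
  -- Fact B : inner integral in y
  have hFactB : ∀ z : ℝ, z ≠ 0 → (∫ y, G (y, z)) = f' (x + z) * Kf z := by
    intro z hz
    rcases hz.lt_or_gt with hneg | hpos
    · have hsec : (fun y => G (y, z)) = fun y =>
          (Set.Iio z).indicator (fun y => f' (x + z) * k y * (-1)) y := by
        funext y
        by_cases hy : y < z
        · have h1 : ¬ (0 < z ∧ z < y) := by rintro ⟨a, b⟩; linarith
          simp only [hGdef]
          rw [if_neg h1, if_pos ⟨hy, hneg⟩,
            Set.indicator_of_mem (Set.mem_Iio.2 hy) (fun y => f' (x + z) * k y * (-1))]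
        · have h1 : ¬ (0 < z ∧ z < y) := by rintro ⟨a, b⟩; linarith
          have h2 : ¬ (y < z ∧ z < 0) := by rintro ⟨a, b⟩; exact hy a
          simp only [hGdef]
          rw [if_neg h1, if_neg h2, Set.indicator_of_notMem (fun hm => hy (Set.mem_Iio.1 hm)),
            mul_zero]
      rw [hsec, integral_indicator measurableSet_Iio]
      have : (∫ y in Set.Iio z, f' (x + z) * k y * (-1))
          = -(f' (x + z) * ∫ y in Set.Iio z, k y) := by
        have : ∀ y : ℝ, f' (x + z) * k y * (-1) = (-(f' (x + z))) * k y := by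
          intro y; ring
        simp_rw [this]
        rw [integral_const_mul]
        ring
      rw [this, hKneg z hneg]
      ring
    · have hsec : (fun y => G (y, z)) = fun y =>
          (Set.Ioi z).indicator (fun y => f' (x + z) * k y) y := by
        funext y
        by_cases hy : z < y
        · have h2 : ¬ (y < z ∧ z < 0) := by rintro ⟨a, b⟩; linarith
          simp only [hGdef]
          rw [if_pos ⟨hpos, hy⟩, Set.indicator_of_mem (Set.mem_Ioi.2 hy)
            (fun y => f' (x + z) * k y), mul_one]
        · have h1 : ¬ (0 < z ∧ z < y) := by rintro ⟨a, b⟩; exact hy b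
          have h2 : ¬ (y < z ∧ z < 0) := by rintro ⟨a, b⟩; linarith
          simp only [hGdef]
          rw [if_neg h1, if_neg h2, Set.indicator_of_notMem (fun hm => hy (Set.mem_Ioi.1 hm)),
            mul_zero]
      rw [hsec, integral_indicator measurableSet_Ioi, integral_const_mul, hKpos z hpos]
  -- a.e. identification of the z-sections integral
  have h0 : ∀ᵐ z : ℝ ∂volume, z ≠ 0 := by
    rw [ae_iff]
    have : {a : ℝ | ¬ a ≠ 0} = {0} := by ext a; simp
    rw [this]
    exact measure_singleton 0
  have hae : (fun z => ∫ y, G (y, z)) =ᵐ[volume] fun z => f' (x + z) * Kf z := by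
    filter_upwards [h0] with z hz
    exact hFactB z hz
  have hint2 : Integrable (fun z : ℝ => f' (x + z) * Kf z) :=
    (hGint.integral_prod_right).congr hae
  refine ⟨hint1, hint2, ?_⟩
  calc (∫ y : ℝ, (f (x + y) - f x) * k y)
      = ∫ y : ℝ, ∫ z : ℝ, G (y, z) :=
        integral_congr_ae (Filter.Eventually.of_forall fun y => (hFactA y).symm)
    _ = ∫ z : ℝ, ∫ y : ℝ, G (y, z) := integral_integral_swap hGint
    _ = ∫ z : ℝ, f' (x + z) * Kf z := integral_congr_ae hae
end

section
/- Fix σ₁, σ₂ > 0, r ∈ ℝ and ρ with |ρ| < 1, let κ = (1/2)·[[σ₁², ρσ₁σ₂],[ρσ₁σ₂, σ₂²]], α = (r − σ₁²/2, r − σ₂²/2), fix Merton densities k₁, k₂, weight parameters η₁, η₂ > 1 and the weight η(x) = −(η₁|x₁| + η₂|x₂|). Then there exist constants c̲ > 0 and β ≥ 0 such that for every smooth compactly supported u : ℝ² → ℝ the Gårding inequality holds: a^η(u, u) ≥ c̲ · ‖u‖²_{H¹_η} − β · ‖u‖²_{L²_η}, where ‖u‖²_{L²_η} = ∫_{ℝ²}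 u² e^{2η(x)} dx and ‖u‖²_{H¹_η} = ∫_{ℝ²} (u² + |∇u|²) e^{2η(x)} dx. -/
open MeasureTheory

lemma gauss_int (c b d : ℝ) (hc : 0 < c) :
    Integrable fun y : ℝ => Real.exp (-(c * y ^ 2) + b * y + d) := by
  have h1 : Integrable fun y : ℝ => Real.exp (-(c * y ^ 2)) := by
    simpa using integrable_exp_neg_mul_sq hc
  have h2 : Integrable fun y : ℝ => Real.exp (-(c * (y - b / (2 * c)) ^ 2)) :=
    h1.comp_sub_right (b / (2 * c))
  have h3 := h2.const_mul (Real.exp (d + b ^ 2 / (4 * c)))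
  refine h3.congr ?_
  filter_upwards with y
  rw [← Real.exp_add]
  congr 1
  field_simp
  ring

lemma merton_int (C γ ν t : ℝ) (hγ : 0 < γ) :
    Integrable fun y : ℝ => Real.exp (t * y) * (C * Real.exp (-(y - ν) ^ 2 / (2 * γ ^ 2))) := by
  have hc : 0 < 1 / (2 * γ ^ 2) := by positivity
  have h := (gauss_int (1 / (2 * γ ^ 2)) (t + ν / γ ^ 2) (-ν ^ 2 / (2 * γ ^ 2)) hc).const_mul C
  refine h.congr ?_
  filter_upwards with y
  rw [mul_comm (Real.exp (t * y)), mul_assoc, ← Real.exp_add]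
  congr 2
  field_simp
  ring

lemma quad_lower (σ₁ σ₂ ρ : ℝ) (hρ : |ρ| < 1) (a b : ℝ) :
    (1 - |ρ|) * min (σ₁ ^ 2) (σ₂ ^ 2) / 2 * (a ^ 2 + b ^ 2) ≤
      1 / 2 * (σ₁ ^ 2 * a * a + ρ * σ₁ * σ₂ * (a * b + b * a) + σ₂ ^ 2 * b * b) := by
  have hm1 : min (σ₁ ^ 2) (σ₂ ^ 2) ≤ σ₁ ^ 2 := min_le_left _ _
  have hm2 : min (σ₁ ^ 2) (σ₂ ^ 2) ≤ σ₂ ^ 2 := min_le_right _ _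
  obtain ⟨hρ1, hρ2⟩ := abs_lt.mp hρ
  rcases abs_cases ρ with ⟨h, h0⟩ | ⟨h, h0⟩
  · rw [h]
    nlinarith [mul_nonneg h0 (sq_nonneg (σ₁ * a + σ₂ * b)),
      mul_nonneg (mul_nonneg (by linarith : (0:ℝ) ≤ 1 - ρ)
        (by linarith : (0:ℝ) ≤ σ₁ ^ 2 - min (σ₁ ^ 2) (σ₂ ^ 2))) (sq_nonneg a),
      mul_nonneg (mul_nonneg (by linarith : (0:ℝ) ≤ 1 - ρ)
        (by linarith : (0:ℝ) ≤ σ₂ ^ 2 - min (σ₁ ^ 2) (σ₂ ^ 2))) (sq_nonneg b)]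
  · rw [h]
    nlinarith [mul_nonneg (by linarith : (0:ℝ) ≤ -ρ) (sq_nonneg (σ₁ * a - σ₂ * b)),
      mul_nonneg (mul_nonneg (by linarith : (0:ℝ) ≤ 1 + ρ)
        (by linarith : (0:ℝ) ≤ σ₁ ^ 2 - min (σ₁ ^ 2) (σ₂ ^ 2))) (sq_nonneg a),
      mul_nonneg (mul_nonneg (by linarith : (0:ℝ) ≤ 1 + ρ)
        (by linarith : (0:ℝ) ≤ σ₂ ^ 2 - min (σ₁ ^ 2) (σ₂ ^ 2))) (sq_nonneg b)]

lemma young8 (c M p q : ℝ) (hc : 0 < c) :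
    M * |p| * |q| ≤ c / 8 * p ^ 2 + 2 * M ^ 2 / c * q ^ 2 := by
  have h := sq_nonneg (c * |p| - 4 * M * |q|)
  have hp : |p| ^ 2 = p ^ 2 := sq_abs p
  have hq : |q| ^ 2 = q ^ 2 := sq_abs q
  have key : M * |p| * |q| * (8 * c) ≤ c ^ 2 * p ^ 2 + 16 * M ^ 2 * q ^ 2 := by nlinarith
  have heq : c / 8 * p ^ 2 + 2 * M ^ 2 / c * q ^ 2
      = (c ^ 2 * p ^ 2 + 16 * M ^ 2 * q ^ 2) / (8 * c) := by field_simp; ring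
  rw [heq, le_div_iff₀ (by positivity)]
  exact key

lemma ptwise_bound (v1 v2 t1 t2 ky cy : ℝ) (hk : 0 ≤ ky) (ht : t2 ≤ t1 + cy) :
    |v1| * ky * (|v2| * Real.exp (2 * t2)) ≤
      ky * Real.exp cy * ((v1 ^ 2 * Real.exp (2 * t1) + v2 ^ 2 * Real.exp (2 * t2)) / 2) := by
  have h2t1 : Real.exp (2 * t1) = Real.exp t1 * Real.exp t1 := by
    rw [← Real.exp_add]; ring_nf
  have h2t2 : Real.exp (2 * t2) = Real.exp t2 * Real.exp t2 := by
    rw [← Real.exp_add]; ring_nf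
  have hexp : Real.exp t2 ≤ Real.exp t1 * Real.exp cy := by
    rw [← Real.exp_add]; exact Real.exp_le_exp.mpr ht
  have hQ : 0 ≤ |v2| * Real.exp t2 := mul_nonneg (abs_nonneg _) (Real.exp_pos _).le
  have hE : (0:ℝ) ≤ Real.exp cy := (Real.exp_pos _).le
  have h2 : |v1| * Real.exp t2 ≤ |v1| * Real.exp t1 * Real.exp cy := by
    rw [mul_assoc]; exact mul_le_mul_of_nonneg_left hexp (abs_nonneg _)
  have h3 : (|v1| * Real.exp t1) * (|v2| * Real.exp t2)
      ≤ ((|v1| * Real.exp t1) ^ 2 + (|v2| * Real.exp t2) ^ 2) / 2 := by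
    nlinarith [sq_nonneg (|v1| * Real.exp t1 - |v2| * Real.exp t2)]
  have hP2 : (|v1| * Real.exp t1) ^ 2 = v1 ^ 2 * Real.exp (2 * t1) := by
    rw [mul_pow, sq_abs, h2t1]; ring
  have hQ2 : (|v2| * Real.exp t2) ^ 2 = v2 ^ 2 * Real.exp (2 * t2) := by
    rw [mul_pow, sq_abs, h2t2]; ring
  calc |v1| * ky * (|v2| * Real.exp (2 * t2))
      = ky * ((|v1| * Real.exp t2) * (|v2| * Real.exp t2)) := by rw [h2t2]; ring
    _ ≤ ky * ((|v1| * Real.exp t1 * Real.exp cy) * (|v2| * Real.exp t2)) :=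
        mul_le_mul_of_nonneg_left (mul_le_mul_of_nonneg_right h2 hQ) hk
    _ = ky * Real.exp cy * ((|v1| * Real.exp t1) * (|v2| * Real.exp t2)) := by ring
    _ ≤ ky * Real.exp cy * (((|v1| * Real.exp t1) ^ 2 + (|v2| * Real.exp t2) ^ 2) / 2) :=
        mul_le_mul_of_nonneg_left h3 (mul_nonneg hk hE)
    _ = ky * Real.exp cy * ((v1 ^ 2 * Real.exp (2 * t1) + v2 ^ 2 * Real.exp (2 * t2)) / 2) := by
        rw [hP2, hQ2]

lemma jump_conv_bound (k : ℝ → ℝ) (hk0 : ∀ y, 0 ≤ k y) (hkc : Continuous k)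
    (c : ℝ) (hc : 0 ≤ c)
    (ikG : Integrable fun y => k y * Real.exp (c * |y|))
    (V : ℝ × ℝ → ℝ) (hVc : Continuous V) (hVs : HasCompactSupport V)
    (η : ℝ × ℝ → ℝ) (hηc : Continuous η) (hη0 : ∀ x, η x ≤ 0)
    (τ : ℝ → ℝ × ℝ) (hτc : Continuous τ)
    (hw : ∀ (x : ℝ × ℝ) (y : ℝ), η x ≤ η (x + τ y) + c * |y|) :
    Integrable (fun x : ℝ × ℝ => (∫ y : ℝ, V (x + τ y) * k y) * (V x * Real.exp (2 * η x))) ∧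
    |∫ x : ℝ × ℝ, (∫ y : ℝ, V (x + τ y) * k y) * (V x * Real.exp (2 * η x))| ≤
      (∫ y : ℝ, k y * Real.exp (c * |y|)) * ∫ x : ℝ × ℝ, V x ^ 2 * Real.exp (2 * η x) := by
  obtain ⟨Mv, hMv⟩ := hVs.exists_bound_of_continuous hVc
  have hMv' : ∀ p, |V p| ≤ Mv := fun p => by simpa using hMv p
  have ik : Integrable k := by
    refine ikG.mono' hkc.aestronglyMeasurable ?_
    filter_upwards with y
    rw [Real.norm_eq_abs, abs_of_nonneg (hk0 y)]
    have h1 : (1:ℝ) ≤ Real.exp (c * |y|) := Real.one_le_exp (mul_nonneg hc (abs_nonneg y))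
    nlinarith [hk0 y]
  have iV : Integrable V := hVc.integrable_of_hasCompactSupport hVs
  have hηexpc : Continuous fun x : ℝ × ℝ => Real.exp (2 * η x) :=
    Real.continuous_exp.comp (continuous_const.mul hηc)
  have iw : Integrable (fun x : ℝ × ℝ => V x ^ 2 * Real.exp (2 * η x)) := by
    refine Continuous.integrable_of_hasCompactSupport ((hVc.pow 2).mul hηexpc) ?_
    exact hVs.mono fun x hx h => hx (by simp [h])
  set H : (ℝ × ℝ) × ℝ → ℝ :=
    fun p => V (p.1 + τ p.2) * k p.2 * (V p.1 * Real.exp (2 * η p.1)) with hH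
  have hHc : Continuous H := by
    apply Continuous.mul
    · exact (hVc.comp (continuous_fst.add (hτc.comp continuous_snd))).mul
        (hkc.comp continuous_snd)
    · exact ((hVc.comp continuous_fst).mul (hηexpc.comp continuous_fst))
  have iH : Integrable H ((volume : Measure (ℝ × ℝ)).prod (volume : Measure ℝ)) := by
    have ibound : Integrable (fun p : (ℝ × ℝ) × ℝ => (Mv * |V p.1|) * k p.2)
        ((volume : Measure (ℝ × ℝ)).prod (volume : Measure ℝ)) :=
      Integrable.mul_prod (iV.abs.const_mul Mv) ik
    refine ibound.mono' hHc.aestronglyMeasurable ?_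
    filter_upwards with p
    rw [Real.norm_eq_abs, hH]
    have he1 : Real.exp (2 * η p.1) ≤ 1 := by
      rw [Real.exp_le_one_iff]
      nlinarith [hη0 p.1]
    have he0 : (0:ℝ) < Real.exp (2 * η p.1) := Real.exp_pos _
    rw [abs_mul, abs_mul, abs_mul, abs_of_nonneg (hk0 p.2), abs_of_nonneg he0.le]
    have h1 : |V (p.1 + τ p.2)| ≤ Mv := hMv' _
    have h2 : |V p.1| * Real.exp (2 * η p.1) ≤ |V p.1| := by
      nlinarith [abs_nonneg (V p.1)]
    have h3 : (0:ℝ) ≤ Mv := (abs_nonneg _).trans (hMv' (0,0))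
    calc |V (p.1 + τ p.2)| * k p.2 * (|V p.1| * Real.exp (2 * η p.1))
        ≤ Mv * k p.2 * |V p.1| := by
          apply mul_le_mul (mul_le_mul_of_nonneg_right h1 (hk0 _)) h2
            (mul_nonneg (abs_nonneg _) he0.le) (mul_nonneg h3 (hk0 _))
      _ = Mv * |V p.1| * k p.2 := by ring
  have hpt : ∀ x : ℝ × ℝ,
      (∫ y : ℝ, V (x + τ y) * k y) * (V x * Real.exp (2 * η x)) = ∫ y : ℝ, H (x, y) := by
    intro x
    rw [← integral_mul_const]
  have hint : Integrable (fun x : ℝ × ℝ =>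
      (∫ y : ℝ, V (x + τ y) * k y) * (V x * Real.exp (2 * η x))) := by
    refine (iH.integral_prod_left).congr ?_
    filter_upwards with x
    exact (hpt x).symm
  refine ⟨hint, ?_⟩
  have hWnn : 0 ≤ ∫ x : ℝ × ℝ, V x ^ 2 * Real.exp (2 * η x) :=
    integral_nonneg fun x => mul_nonneg (sq_nonneg _) (Real.exp_pos _).le
  set W : ℝ := ∫ x : ℝ × ℝ, V x ^ 2 * Real.exp (2 * η x) with hW
  have step1 : |∫ x : ℝ × ℝ, (∫ y : ℝ, V (x + τ y) * k y) * (V x * Real.exp (2 * η x))|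
      ≤ ∫ x : ℝ × ℝ, ∫ y : ℝ, ‖H (x, y)‖ := by
    rw [← Real.norm_eq_abs]
    refine (norm_integral_le_integral_norm _).trans ?_
    refine integral_mono_of_nonneg (Filter.Eventually.of_forall fun x => norm_nonneg _)
      iH.integral_norm_prod_left ?_
    filter_upwards with x
    rw [hpt x]
    exact norm_integral_le_integral_norm _
  have hswap : (∫ x : ℝ × ℝ, ∫ y : ℝ, ‖H (x, y)‖) = ∫ y : ℝ, ∫ x : ℝ × ℝ, ‖H (x, y)‖ := by
    apply integral_integral_swap
    exact (iH.norm :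
      Integrable (Function.uncurry fun x y => ‖H (x, y)‖) _)
  have step2 : ∀ y : ℝ, (∫ x : ℝ × ℝ, ‖H (x, y)‖) ≤ k y * Real.exp (c * |y|) * W := by
    intro y
    have itrans : Integrable (fun x : ℝ × ℝ => V (x + τ y) ^ 2 * Real.exp (2 * η (x + τ y))) :=
      iw.comp_add_right (τ y)
    have hbint : Integrable (fun x : ℝ × ℝ => k y * Real.exp (c * |y|) *
        ((V (x + τ y) ^ 2 * Real.exp (2 * η (x + τ y)) + V x ^ 2 * Real.exp (2 * η x)) / 2)) :=
      ((itrans.add iw).div_const 2).const_mul _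
    have hptle : ∀ x : ℝ × ℝ, ‖H (x, y)‖ ≤ k y * Real.exp (c * |y|) *
        ((V (x + τ y) ^ 2 * Real.exp (2 * η (x + τ y)) + V x ^ 2 * Real.exp (2 * η x)) / 2) := by
      intro x
      rw [Real.norm_eq_abs, hH]
      have := ptwise_bound (V (x + τ y)) (V x) (η (x + τ y)) (η x) (k y) (c * |y|)
        (hk0 y) (hw x y)
      calc |V (x + τ y) * k y * (V x * Real.exp (2 * η x))|
          = |V (x + τ y)| * k y * (|V x| * Real.exp (2 * η x)) := by
            rw [abs_mul, abs_mul, abs_mul, abs_of_nonneg (hk0 y),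
              abs_of_nonneg (Real.exp_pos _).le]
        _ ≤ _ := this
    have := integral_mono_of_nonneg (Filter.Eventually.of_forall fun x => norm_nonneg (H (x, y)))
      hbint (Filter.Eventually.of_forall hptle)
    refine this.trans ?_
    rw [integral_const_mul, integral_div, integral_add itrans iw]
    rw [integral_add_right_eq_self (fun x : ℝ × ℝ => V x ^ 2 * Real.exp (2 * η x)) (τ y)]
    rw [← hW]
    ring_nf
    exact le_refl _
  have step3 : (∫ y : ℝ, ∫ x : ℝ × ℝ, ‖H (x, y)‖) ≤ ∫ y : ℝ, k y * Real.exp (c * |y|) * W := by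
    refine integral_mono_of_nonneg (Filter.Eventually.of_forall fun y =>
      integral_nonneg fun x => norm_nonneg _) (ikG.mul_const W)
      (Filter.Eventually.of_forall step2)
  calc |∫ x : ℝ × ℝ, (∫ y : ℝ, V (x + τ y) * k y) * (V x * Real.exp (2 * η x))|
      ≤ ∫ x : ℝ × ℝ, ∫ y : ℝ, ‖H (x, y)‖ := step1
    _ = ∫ y : ℝ, ∫ x : ℝ × ℝ, ‖H (x, y)‖ := hswap
    _ ≤ ∫ y : ℝ, k y * Real.exp (c * |y|) * W := step3
    _ = (∫ y : ℝ, k y * Real.exp (c * |y|)) * W := integral_mul_const _ _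

lemma inner_decomp (k : ℝ → ℝ) (hk0 : ∀ y, 0 ≤ k y) (hkc : Continuous k)
    (ik : Integrable k) (iek : Integrable fun y => (Real.exp y - 1) * k y)
    (φ : ℝ → ℝ) (hφc : Continuous φ) (M : ℝ) (hφb : ∀ t, |φ t| ≤ M)
    (s q c : ℝ) :
    (∫ y : ℝ, (φ y - s - (Real.exp y - 1) * q) * k y) * c
      = (∫ y : ℝ, φ y * k y) * c
        - ((∫ y : ℝ, k y) * (s * c) + (∫ y : ℝ, (Real.exp y - 1) * k y) * (q * c)) := by
  have iφk : Integrable fun y => φ y * k y := by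
    refine (ik.const_mul M).mono' (hφc.mul hkc).aestronglyMeasurable ?_
    filter_upwards with y
    rw [Real.norm_eq_abs, abs_mul, abs_of_nonneg (hk0 y)]
    exact mul_le_mul_of_nonneg_right (hφb y) (hk0 y)
  have h1 : (fun y => (φ y - s - (Real.exp y - 1) * q) * k y * c)
      = fun y => φ y * k y * c - (k y * (s * c) + ((Real.exp y - 1) * k y) * (q * c)) := by
    funext y; ring
  calc (∫ y : ℝ, (φ y - s - (Real.exp y - 1) * q) * k y) * c
      = ∫ y : ℝ, (φ y - s - (Real.exp y - 1) * q) * k y * c := (integral_mul_const _ _).symm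
    _ = ∫ y : ℝ, (φ y * k y * c - (k y * (s * c) + ((Real.exp y - 1) * k y) * (q * c))) := by
        rw [h1]
    _ = (∫ y : ℝ, φ y * k y * c)
        - ∫ y : ℝ, (k y * (s * c) + ((Real.exp y - 1) * k y) * (q * c)) :=
        integral_sub (iφk.mul_const c) ((ik.mul_const _).add (iek.mul_const _))
    _ = (∫ y : ℝ, φ y * k y) * c
        - ((∫ y : ℝ, k y) * (s * c) + (∫ y : ℝ, (Real.exp y - 1) * k y) * (q * c)) := by
        rw [integral_add (ik.mul_const _) (iek.mul_const _), integral_mul_const,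
          integral_mul_const, integral_mul_const]

lemma weighted_young (M p uu E c0 : ℝ) (hM : 0 ≤ M) (hE : 0 ≤ E) (hc0 : 0 < c0) :
    M * |p| * |uu| * E ≤ c0 / 8 * (p ^ 2 * E) + 2 * M ^ 2 / c0 * (uu ^ 2 * E) := by
  have h := young8 c0 M p uu hc0
  nlinarith [h, hE, sq_nonneg p, sq_nonneg uu,
    mul_nonneg (mul_nonneg hM (abs_nonneg p)) (abs_nonneg uu)]

set_option maxHeartbeats 1600000 in
/-- Gårding inequality for the weighted bilinear form a^η (Proposition 3.1, part 2):
    a^η(u,u) ≥ c̲ ‖u‖²_{H¹_η} − β ‖u‖²_{L²_η} for smooth compactly supported u. -/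
theorem stmt_19 (σ₁ σ₂ : ℝ) (hσ₁ : 0 < σ₁) (hσ₂ : 0 < σ₂) (r : ℝ)
    (ρ : ℝ) (hρ : |ρ| < 1)
    (lam₁ lam₂ γ₁ γ₂ ν₁ ν₂ : ℝ)
    (hlam₁ : 0 < lam₁) (hlam₂ : 0 < lam₂) (hγ₁ : 0 < γ₁) (hγ₂ : 0 < γ₂)
    (η₁ η₂ : ℝ) (hη₁ : 1 < η₁) (hη₂ : 1 < η₂) :
    let k₁ : ℝ → ℝ := fun y =>
      lam₁ / (Real.sqrt (2 * Real.pi) * γ₁) * Real.exp (-(y - ν₁) ^ 2 / (2 * γ₁ ^ 2))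
    let k₂ : ℝ → ℝ := fun y =>
      lam₂ / (Real.sqrt (2 * Real.pi) * γ₂) * Real.exp (-(y - ν₂) ^ 2 / (2 * γ₂ ^ 2))
    let η : ℝ × ℝ → ℝ := fun x => -(η₁ * |x.1| + η₂ * |x.2|)
    -- partial derivatives
    let d₁ : (ℝ → ℝ → ℝ) → ℝ × ℝ → ℝ := fun w x => deriv (fun a => w a x.2) x.1
    let d₂ : (ℝ → ℝ → ℝ) → ℝ × ℝ → ℝ := fun w x => deriv (fun b => w x.1 b) x.2
    -- components of κ ∇η(x), with ∇η(x) = (−η₁ sgn x₁, −η₂ sgn x₂)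
    let K₁ : ℝ × ℝ → ℝ := fun x =>
      (1 / 2) * (σ₁ ^ 2 * (-(η₁ * Real.sign x.1)) + ρ * σ₁ * σ₂ * (-(η₂ * Real.sign x.2)))
    let K₂ : ℝ × ℝ → ℝ := fun x =>
      (1 / 2) * (ρ * σ₁ * σ₂ * (-(η₁ * Real.sign x.1)) + σ₂ ^ 2 * (-(η₂ * Real.sign x.2)))
    -- jump operator
    let J : (ℝ → ℝ → ℝ) → ℝ × ℝ → ℝ := fun u x =>
      (∫ y : ℝ,
        (u (x.1 + y) x.2 - u x.1 x.2 - (Real.exp y - 1) * d₁ u x) * k₁ y) +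
      (∫ y : ℝ,
        (u x.1 (x.2 + y) - u x.1 x.2 - (Real.exp y - 1) * d₂ u x) * k₂ y)
    -- weighted bilinear form
    let aη : (ℝ → ℝ → ℝ) → (ℝ → ℝ → ℝ) → ℝ := fun u v =>
      (∫ x : ℝ × ℝ,
        ((1 / 2) * (σ₁ ^ 2 * d₁ u x * d₁ v x +
            ρ * σ₁ * σ₂ * (d₁ u x * d₂ v x + d₂ u x * d₁ v x) +
            σ₂ ^ 2 * d₂ u x * d₂ v x) -
          (((r - σ₁ ^ 2 / 2) + K₁ x) * d₁ u x +
            ((r - σ₂ ^ 2 / 2) + K₂ x) * d₂ u x) * v x.1 x.2) *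
          Real.exp (2 * η x)) -
      ∫ x : ℝ × ℝ, J u x * v x.1 x.2 * Real.exp (2 * η x)
    -- squared weighted L² and H¹ norms
    let L2sq : (ℝ → ℝ → ℝ) → ℝ := fun w =>
      ∫ x : ℝ × ℝ, (w x.1 x.2) ^ 2 * Real.exp (2 * η x)
    let H1sq : (ℝ → ℝ → ℝ) → ℝ := fun w =>
      ∫ x : ℝ × ℝ,
        ((w x.1 x.2) ^ 2 + (d₁ w x) ^ 2 + (d₂ w x) ^ 2) * Real.exp (2 * η x)
    ∃ cl β : ℝ, 0 < cl ∧ 0 ≤ β ∧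
      ∀ u : ℝ → ℝ → ℝ,
        ContDiff ℝ (⊤ : ℕ∞) (fun p : ℝ × ℝ => u p.1 p.2) →
        HasCompactSupport (fun p : ℝ × ℝ => u p.1 p.2) →
        aη u u ≥ cl * H1sq u - β * L2sq u := by
  intro k₁ k₂ η d₁ d₂ K₁ K₂ J aη L2sq H1sq
  have hd₁e : ∀ (w : ℝ → ℝ → ℝ) (x : ℝ × ℝ), d₁ w x = deriv (fun a => w a x.2) x.1 :=
    fun _ _ => rfl
  have hd₂e : ∀ (w : ℝ → ℝ → ℝ) (x : ℝ × ℝ), d₂ w x = deriv (fun b => w x.1 b) x.2 :=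
    fun _ _ => rfl
  have hK₁e : ∀ x : ℝ × ℝ, K₁ x =
      (1 / 2) * (σ₁ ^ 2 * (-(η₁ * Real.sign x.1)) + ρ * σ₁ * σ₂ * (-(η₂ * Real.sign x.2))) :=
    fun _ => rfl
  have hK₂e : ∀ x : ℝ × ℝ, K₂ x =
      (1 / 2) * (ρ * σ₁ * σ₂ * (-(η₁ * Real.sign x.1)) + σ₂ ^ 2 * (-(η₂ * Real.sign x.2))) :=
    fun _ => rfl
  have hJe : ∀ (w : ℝ → ℝ → ℝ) (x : ℝ × ℝ), J w x =
      (∫ y : ℝ, (w (x.1 + y) x.2 - w x.1 x.2 - (Real.exp y - 1) * d₁ w x) * k₁ y) +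
      (∫ y : ℝ, (w x.1 (x.2 + y) - w x.1 x.2 - (Real.exp y - 1) * d₂ w x) * k₂ y) :=
    fun _ _ => rfl
  have haηe : ∀ v w : ℝ → ℝ → ℝ, aη v w =
      (∫ x : ℝ × ℝ,
        ((1 / 2) * (σ₁ ^ 2 * d₁ v x * d₁ w x +
            ρ * σ₁ * σ₂ * (d₁ v x * d₂ w x + d₂ v x * d₁ w x) +
            σ₂ ^ 2 * d₂ v x * d₂ w x) -
          (((r - σ₁ ^ 2 / 2) + K₁ x) * d₁ v x +
            ((r - σ₂ ^ 2 / 2) + K₂ x) * d₂ v x) * w x.1 x.2) *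
          Real.exp (2 * η x)) -
      ∫ x : ℝ × ℝ, J v x * w x.1 x.2 * Real.exp (2 * η x) := fun _ _ => rfl
  have hL2e : ∀ w : ℝ → ℝ → ℝ, L2sq w =
      ∫ x : ℝ × ℝ, (w x.1 x.2) ^ 2 * Real.exp (2 * η x) := fun _ => rfl
  have hH1e : ∀ w : ℝ → ℝ → ℝ, H1sq w =
      ∫ x : ℝ × ℝ, ((w x.1 x.2) ^ 2 + (d₁ w x) ^ 2 + (d₂ w x) ^ 2) * Real.exp (2 * η x) :=
    fun _ => rfl
  have hη₁0 : (0:ℝ) < η₁ := lt_trans one_pos hη₁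
  have hη₂0 : (0:ℝ) < η₂ := lt_trans one_pos hη₂
  have hk₁e : k₁ = fun y =>
      lam₁ / (Real.sqrt (2 * Real.pi) * γ₁) * Real.exp (-(y - ν₁) ^ 2 / (2 * γ₁ ^ 2)) := rfl
  have hk₂e : k₂ = fun y =>
      lam₂ / (Real.sqrt (2 * Real.pi) * γ₂) * Real.exp (-(y - ν₂) ^ 2 / (2 * γ₂ ^ 2)) := rfl
  have hηe : ∀ x : ℝ × ℝ, η x = -(η₁ * |x.1| + η₂ * |x.2|) := fun _ => rfl
  have hηe' : η = fun x : ℝ × ℝ => -(η₁ * |x.1| + η₂ * |x.2|) := rfl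
  clear_value k₁ k₂ η d₁ d₂ K₁ K₂ J aη L2sq H1sq
  have hsqrtpos : (0:ℝ) < Real.sqrt (2 * Real.pi) := Real.sqrt_pos.mpr (by positivity)
  have hk₁0 : ∀ y, 0 ≤ k₁ y := by
    intro y; simp only [hk₁e]; positivity
  have hk₂0 : ∀ y, 0 ≤ k₂ y := by
    intro y; simp only [hk₂e]; positivity
  have hk₁c : Continuous k₁ := by rw [hk₁e]; fun_prop
  have hk₂c : Continuous k₂ := by rw [hk₂e]; fun_prop
  have ik₁ : Integrable k₁ := by
    rw [hk₁e]
    simpa using merton_int (lam₁ / (Real.sqrt (2 * Real.pi) * γ₁)) γ₁ ν₁ 0 hγ₁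
  have ik₂ : Integrable k₂ := by
    rw [hk₂e]
    simpa using merton_int (lam₂ / (Real.sqrt (2 * Real.pi) * γ₂)) γ₂ ν₂ 0 hγ₂
  have iek₁ : Integrable fun y => (Real.exp y - 1) * k₁ y := by
    simp only [hk₁e]
    refine ((merton_int (lam₁ / (Real.sqrt (2 * Real.pi) * γ₁)) γ₁ ν₁ 1 hγ₁).sub
      (merton_int (lam₁ / (Real.sqrt (2 * Real.pi) * γ₁)) γ₁ ν₁ 0 hγ₁)).congr ?_
    filter_upwards with y
    simp [Real.exp_zero]
    ring
  have iek₂ : Integrable fun y => (Real.exp y - 1) * k₂ y := by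
    simp only [hk₂e]
    refine ((merton_int (lam₂ / (Real.sqrt (2 * Real.pi) * γ₂)) γ₂ ν₂ 1 hγ₂).sub
      (merton_int (lam₂ / (Real.sqrt (2 * Real.pi) * γ₂)) γ₂ ν₂ 0 hγ₂)).congr ?_
    filter_upwards with y
    simp [Real.exp_zero]
    ring
  have iGk₁ : Integrable fun y => k₁ y * Real.exp (η₁ * |y|) := by
    have hint : Integrable fun y =>
        Real.exp (η₁ * y) * k₁ y + Real.exp (-η₁ * y) * k₁ y := by
      simp only [hk₁e]
      exact (merton_int (lam₁ / (Real.sqrt (2 * Real.pi) * γ₁)) γ₁ ν₁ η₁ hγ₁).add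
        (merton_int (lam₁ / (Real.sqrt (2 * Real.pi) * γ₁)) γ₁ ν₁ (-η₁) hγ₁)
    refine hint.mono' ((hk₁c.mul
      (Real.continuous_exp.comp (continuous_const.mul continuous_abs)))).aestronglyMeasurable ?_
    filter_upwards with y
    rw [Real.norm_eq_abs, abs_of_nonneg (mul_nonneg (hk₁0 y) (Real.exp_pos _).le)]
    rcases abs_cases y with ⟨h, _⟩ | ⟨h, _⟩
    · rw [h]
      nlinarith [mul_nonneg (Real.exp_pos (-η₁ * y)).le (hk₁0 y), hk₁0 y,
        (Real.exp_pos (η₁ * y)).le]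
    · rw [h, show η₁ * -y = -η₁ * y by ring]
      nlinarith [mul_nonneg (Real.exp_pos (η₁ * y)).le (hk₁0 y), hk₁0 y,
        (Real.exp_pos (-η₁ * y)).le]
  have iGk₂ : Integrable fun y => k₂ y * Real.exp (η₂ * |y|) := by
    have hint : Integrable fun y =>
        Real.exp (η₂ * y) * k₂ y + Real.exp (-η₂ * y) * k₂ y := by
      simp only [hk₂e]
      exact (merton_int (lam₂ / (Real.sqrt (2 * Real.pi) * γ₂)) γ₂ ν₂ η₂ hγ₂).add
        (merton_int (lam₂ / (Real.sqrt (2 * Real.pi) * γ₂)) γ₂ ν₂ (-η₂) hγ₂)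
    refine hint.mono' ((hk₂c.mul
      (Real.continuous_exp.comp (continuous_const.mul continuous_abs)))).aestronglyMeasurable ?_
    filter_upwards with y
    rw [Real.norm_eq_abs, abs_of_nonneg (mul_nonneg (hk₂0 y) (Real.exp_pos _).le)]
    rcases abs_cases y with ⟨h, _⟩ | ⟨h, _⟩
    · rw [h]
      nlinarith [mul_nonneg (Real.exp_pos (-η₂ * y)).le (hk₂0 y), hk₂0 y,
        (Real.exp_pos (η₂ * y)).le]
    · rw [h, show η₂ * -y = -η₂ * y by ring]
      nlinarith [mul_nonneg (Real.exp_pos (η₂ * y)).le (hk₂0 y), hk₂0 y,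
        (Real.exp_pos (-η₂ * y)).le]
  
  -- sign function facts
  have hsgnm : Measurable Real.sign := by
    have h : Real.sign = fun r : ℝ => if r < 0 then (-1:ℝ) else if 0 < r then 1 else 0 :=
      funext fun r => rfl
    rw [h]
    exact Measurable.ite (measurableSet_lt measurable_id measurable_const) measurable_const
      (Measurable.ite (measurableSet_lt measurable_const measurable_id) measurable_const
        measurable_const)
  -- constants
  set m : ℝ := min (σ₁ ^ 2) (σ₂ ^ 2) with hmdef
  set c0 : ℝ := (1 - |ρ|) * m / 2 with hc0def
  have hm0 : 0 < m := lt_min (by positivity) (by positivity)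
  have hc0 : 0 < c0 := by
    rw [hc0def]
    have : 0 < 1 - |ρ| := by linarith
    positivity
  set M₁ : ℝ := |r - σ₁ ^ 2 / 2| + (σ₁ ^ 2 * η₁ + |ρ| * σ₁ * σ₂ * η₂) / 2 with hM₁def
  set M₂ : ℝ := |r - σ₂ ^ 2 / 2| + (|ρ| * σ₁ * σ₂ * η₁ + σ₂ ^ 2 * η₂) / 2 with hM₂def
  have hM₁0 : 0 ≤ M₁ := by
    rw [hM₁def]
    have h1 : 0 ≤ σ₁ ^ 2 * η₁ := mul_nonneg (sq_nonneg _) hη₁0.le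
    have h2 : 0 ≤ |ρ| * σ₁ * σ₂ * η₂ :=
      mul_nonneg (mul_nonneg (mul_nonneg (abs_nonneg _) hσ₁.le) hσ₂.le) hη₂0.le
    have := abs_nonneg (r - σ₁ ^ 2 / 2)
    linarith
  have hM₂0 : 0 ≤ M₂ := by
    rw [hM₂def]
    have h1 : 0 ≤ σ₂ ^ 2 * η₂ := mul_nonneg (sq_nonneg _) hη₂0.le
    have h2 : 0 ≤ |ρ| * σ₁ * σ₂ * η₁ :=
      mul_nonneg (mul_nonneg (mul_nonneg (abs_nonneg _) hσ₁.le) hσ₂.le) hη₁0.le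
    have := abs_nonneg (r - σ₂ ^ 2 / 2)
    linarith
  set Λ₁ : ℝ := ∫ y : ℝ, k₁ y with hΛ₁def
  set Λ₂ : ℝ := ∫ y : ℝ, k₂ y with hΛ₂def
  have hΛ₁0 : 0 ≤ Λ₁ := integral_nonneg hk₁0
  have hΛ₂0 : 0 ≤ Λ₂ := integral_nonneg hk₂0
  set E₁r : ℝ := ∫ y : ℝ, (Real.exp y - 1) * k₁ y with hE₁rdef
  set E₂r : ℝ := ∫ y : ℝ, (Real.exp y - 1) * k₂ y with hE₂rdef
  set E₁ : ℝ := |E₁r| with hE₁def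
  set E₂ : ℝ := |E₂r| with hE₂def
  have hE₁0 : 0 ≤ E₁ := abs_nonneg _
  have hE₂0 : 0 ≤ E₂ := abs_nonneg _
  set G₁ : ℝ := ∫ y : ℝ, k₁ y * Real.exp (η₁ * |y|) with hG₁def
  set G₂ : ℝ := ∫ y : ℝ, k₂ y * Real.exp (η₂ * |y|) with hG₂def
  have hG₁0 : 0 ≤ G₁ :=
    integral_nonneg fun y => mul_nonneg (hk₁0 y) (Real.exp_pos _).le
  have hG₂0 : 0 ≤ G₂ :=
    integral_nonneg fun y => mul_nonneg (hk₂0 y) (Real.exp_pos _).le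
  refine ⟨c0 / 2, c0 / 2 + (2 * M₁ ^ 2 / c0 + 2 * M₂ ^ 2 / c0)
      + (2 * E₁ ^ 2 / c0 + 2 * E₂ ^ 2 / c0) + (Λ₁ + Λ₂ + G₁ + G₂),
    half_pos hc0, ?_, ?_⟩
  · have h1 : 0 ≤ 2 * M₁ ^ 2 / c0 := div_nonneg (by positivity) hc0.le
    have h2 : 0 ≤ 2 * M₂ ^ 2 / c0 := div_nonneg (by positivity) hc0.le
    have h3 : 0 ≤ 2 * E₁ ^ 2 / c0 := div_nonneg (by positivity) hc0.le
    have h4 : 0 ≤ 2 * E₂ ^ 2 / c0 := div_nonneg (by positivity) hc0.le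
    have h5 : 0 ≤ c0 / 2 := (half_pos hc0).le
    linarith
  intro u hu hs
    -- basic facts about u
  have hUc : Continuous fun p : ℝ × ℝ => u p.1 p.2 := hu.continuous
  obtain ⟨Mu, hMu0⟩ := hs.exists_bound_of_continuous hUc
  have hMu : ∀ s t : ℝ, |u s t| ≤ Mu := fun s t => by simpa using hMu0 (s, t)
  have hMu0' : (0:ℝ) ≤ Mu := (abs_nonneg _).trans (hMu 0 0)
  -- partial derivatives
  have hd1 : ∀ x : ℝ × ℝ, d₁ u x = fderiv ℝ (fun p : ℝ × ℝ => u p.1 p.2) x (1, 0) := by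
    intro x
    rw [hd₁e]
    have h1 : HasFDerivAt (fun a : ℝ => (a, x.2)) ((ContinuousLinearMap.id ℝ ℝ).prod 0) x.1 :=
      HasFDerivAt.prodMk (hasFDerivAt_id x.1) (hasFDerivAt_const x.2 x.1)
    have h2 := ((hu.differentiable (by simp)) x).hasFDerivAt.comp x.1 h1
    have h3 : HasDerivAt (fun a => u a x.2)
        (fderiv ℝ (fun p : ℝ × ℝ => u p.1 p.2) x (1, 0)) x.1 := by
      simpa [Function.comp_def] using h2.hasDerivAt
    exact h3.deriv
  have hd2 : ∀ x : ℝ × ℝ, d₂ u x = fderiv ℝ (fun p : ℝ × ℝ => u p.1 p.2) x (0, 1) := by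
    intro x
    rw [hd₂e]
    have h1 : HasFDerivAt (fun b : ℝ => (x.1, b))
        ((0 : ℝ →L[ℝ] ℝ).prod (ContinuousLinearMap.id ℝ ℝ)) x.2 :=
      HasFDerivAt.prodMk (hasFDerivAt_const x.1 x.2) (hasFDerivAt_id x.2)
    have h2 := ((hu.differentiable (by simp)) x).hasFDerivAt.comp x.2 h1
    have h3 : HasDerivAt (fun b => u x.1 b)
        (fderiv ℝ (fun p : ℝ × ℝ => u p.1 p.2) x (0, 1)) x.2 := by
      simpa [Function.comp_def] using h2.hasDerivAt
    exact h3.deriv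
  set p₁ : ℝ × ℝ → ℝ := fun x => fderiv ℝ (fun p : ℝ × ℝ => u p.1 p.2) x (1, 0) with hp₁def
  set p₂ : ℝ × ℝ → ℝ := fun x => fderiv ℝ (fun p : ℝ × ℝ => u p.1 p.2) x (0, 1) with hp₂def
  have hp₁c : Continuous p₁ := by
    rw [hp₁def]; exact (hu.continuous_fderiv (by simp)).clm_apply continuous_const
  have hp₂c : Continuous p₂ := by
    rw [hp₂def]; exact (hu.continuous_fderiv (by simp)).clm_apply continuous_const
  have hp₁s : HasCompactSupport p₁ := by
    rw [hp₁def]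
    exact (hs.fderiv ℝ).comp_left (g := fun L : (ℝ × ℝ) →L[ℝ] ℝ => L (1, 0)) rfl
  have hp₂s : HasCompactSupport p₂ := by
    rw [hp₂def]
    exact (hs.fderiv ℝ).comp_left (g := fun L : (ℝ × ℝ) →L[ℝ] ℝ => L (0, 1)) rfl
  -- weight facts
  have hηc : Continuous η := by rw [hηe']; fun_prop
  have hη0 : ∀ x : ℝ × ℝ, η x ≤ 0 := by
    intro x
    rw [hηe x]
    nlinarith [abs_nonneg x.1, abs_nonneg x.2,
      mul_nonneg hη₁0.le (abs_nonneg x.1), mul_nonneg hη₂0.le (abs_nonneg x.2)]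
  have hec : Continuous fun x : ℝ × ℝ => Real.exp (2 * η x) :=
    Real.continuous_exp.comp (continuous_const.mul hηc)
  have he0 : ∀ x : ℝ × ℝ, (0:ℝ) < Real.exp (2 * η x) := fun x => Real.exp_pos _
  have hee : ∀ x : ℝ × ℝ, Real.exp (2 * η x) ≤ 1 := by
    intro x
    rw [Real.exp_le_one_iff]
    nlinarith [hη0 x]
  -- compact support helper
  have hsupp2 : ∀ F : ℝ × ℝ → ℝ,
      (∀ x, u x.1 x.2 = 0 → fderiv ℝ (fun p : ℝ × ℝ => u p.1 p.2) x = 0 → F x = 0) →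
      HasCompactSupport F := by
    intro F hF
    have h1 : HasCompactSupport fun x : ℝ × ℝ =>
        ‖u x.1 x.2‖ + ‖fderiv ℝ (fun p : ℝ × ℝ => u p.1 p.2) x‖ := by
      exact (hs.norm.add (hs.fderiv ℝ).norm)
    refine h1.mono fun x hx h => hx ?_
    have h2 : ‖u x.1 x.2‖ = 0 ∧ ‖fderiv ℝ (fun p : ℝ × ℝ => u p.1 p.2) x‖ = 0 := by
      constructor <;>
        nlinarith [norm_nonneg (u x.1 x.2),
          norm_nonneg (fderiv ℝ (fun p : ℝ × ℝ => u p.1 p.2) x)]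
    exact hF x (norm_eq_zero.mp h2.1) (norm_eq_zero.mp h2.2)
  have hp₁z : ∀ x : ℝ × ℝ, fderiv ℝ (fun p : ℝ × ℝ => u p.1 p.2) x = 0 → p₁ x = 0 := by
    intro x h; rw [hp₁def]; simp [h]
  have hp₂z : ∀ x : ℝ × ℝ, fderiv ℝ (fun p : ℝ × ℝ => u p.1 p.2) x = 0 → p₂ x = 0 := by
    intro x h; rw [hp₂def]; simp [h]
    -- integrable functions on ℝ²
  have iw : Integrable fun x : ℝ × ℝ => (u x.1 x.2) ^ 2 * Real.exp (2 * η x) := by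
    refine Continuous.integrable_of_hasCompactSupport ((hUc.pow 2).mul hec) ?_
    exact hsupp2 _ fun x h1 _ => by simp [h1]
  have iI₁f : Integrable fun x : ℝ × ℝ => p₁ x ^ 2 * Real.exp (2 * η x) := by
    refine Continuous.integrable_of_hasCompactSupport ((hp₁c.pow 2).mul hec) ?_
    exact hsupp2 _ fun x _ h2 => by simp [hp₁z x h2]
  have iI₂f : Integrable fun x : ℝ × ℝ => p₂ x ^ 2 * Real.exp (2 * η x) := by
    refine Continuous.integrable_of_hasCompactSupport ((hp₂c.pow 2).mul hec) ?_
    exact hsupp2 _ fun x _ h2 => by simp [hp₂z x h2]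
  have iQf : Integrable fun x : ℝ × ℝ =>
      (1 / 2) * (σ₁ ^ 2 * p₁ x * p₁ x +
        ρ * σ₁ * σ₂ * (p₁ x * p₂ x + p₂ x * p₁ x) + σ₂ ^ 2 * p₂ x * p₂ x) *
        Real.exp (2 * η x) := by
    refine Continuous.integrable_of_hasCompactSupport ?_ ?_
    · fun_prop
    · exact hsupp2 _ fun x _ h2 => by simp [hp₁z x h2, hp₂z x h2]
  have ipU₁ : Integrable fun x : ℝ × ℝ => p₁ x * (u x.1 x.2 * Real.exp (2 * η x)) := by
    refine Continuous.integrable_of_hasCompactSupport (hp₁c.mul (hUc.mul hec)) ?_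
    exact hsupp2 _ fun x h1 _ => by simp [h1]
  have ipU₂ : Integrable fun x : ℝ × ℝ => p₂ x * (u x.1 x.2 * Real.exp (2 * η x)) := by
    refine Continuous.integrable_of_hasCompactSupport (hp₂c.mul (hUc.mul hec)) ?_
    exact hsupp2 _ fun x h1 _ => by simp [h1]
  -- coefficient bounds
  have hsgn1 : ∀ t : ℝ, |Real.sign t| ≤ 1 := by
    intro t
    rcases Real.sign_apply_eq t with h | h | h <;> rw [h] <;> norm_num
  have hc₁b : ∀ x : ℝ × ℝ, |(r - σ₁ ^ 2 / 2) + K₁ x| ≤ M₁ := by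
    intro x
    rw [hK₁e x, hM₁def]
    have hA : |σ₁ ^ 2 * (-(η₁ * Real.sign x.1))| ≤ σ₁ ^ 2 * η₁ := by
      rw [abs_mul, abs_neg, abs_mul, abs_of_nonneg (sq_nonneg σ₁), abs_of_nonneg hη₁0.le]
      calc σ₁ ^ 2 * (η₁ * |Real.sign x.1|) ≤ σ₁ ^ 2 * (η₁ * 1) :=
            mul_le_mul_of_nonneg_left
              (mul_le_mul_of_nonneg_left (hsgn1 x.1) hη₁0.le) (sq_nonneg σ₁)
        _ = σ₁ ^ 2 * η₁ := by ring
    have hB : |ρ * σ₁ * σ₂ * (-(η₂ * Real.sign x.2))| ≤ |ρ| * σ₁ * σ₂ * η₂ := by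
      rw [abs_mul, abs_neg, abs_mul, abs_mul, abs_mul, abs_of_nonneg hσ₁.le,
        abs_of_nonneg hσ₂.le, abs_of_nonneg hη₂0.le]
      calc |ρ| * σ₁ * σ₂ * (η₂ * |Real.sign x.2|) ≤ |ρ| * σ₁ * σ₂ * (η₂ * 1) :=
            mul_le_mul_of_nonneg_left (mul_le_mul_of_nonneg_left (hsgn1 x.2) hη₂0.le)
              (mul_nonneg (mul_nonneg (abs_nonneg ρ) hσ₁.le) hσ₂.le)
        _ = |ρ| * σ₁ * σ₂ * η₂ := by ring
    have h1 := abs_add_le (r - σ₁ ^ 2 / 2)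
      ((1 / 2) * (σ₁ ^ 2 * (-(η₁ * Real.sign x.1)) + ρ * σ₁ * σ₂ * (-(η₂ * Real.sign x.2))))
    have h2 : |(1 / 2) * (σ₁ ^ 2 * (-(η₁ * Real.sign x.1)) +
        ρ * σ₁ * σ₂ * (-(η₂ * Real.sign x.2)))|
        ≤ (σ₁ ^ 2 * η₁ + |ρ| * σ₁ * σ₂ * η₂) / 2 := by
      rw [abs_mul, abs_of_nonneg (by norm_num : (0:ℝ) ≤ 1 / 2)]
      have := abs_add_le (σ₁ ^ 2 * (-(η₁ * Real.sign x.1)))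
        (ρ * σ₁ * σ₂ * (-(η₂ * Real.sign x.2)))
      linarith
    linarith
  have hc₂b : ∀ x : ℝ × ℝ, |(r - σ₂ ^ 2 / 2) + K₂ x| ≤ M₂ := by
    intro x
    rw [hK₂e x, hM₂def]
    have hA : |σ₂ ^ 2 * (-(η₂ * Real.sign x.2))| ≤ σ₂ ^ 2 * η₂ := by
      rw [abs_mul, abs_neg, abs_mul, abs_of_nonneg (sq_nonneg σ₂), abs_of_nonneg hη₂0.le]
      calc σ₂ ^ 2 * (η₂ * |Real.sign x.2|) ≤ σ₂ ^ 2 * (η₂ * 1) :=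
            mul_le_mul_of_nonneg_left
              (mul_le_mul_of_nonneg_left (hsgn1 x.2) hη₂0.le) (sq_nonneg σ₂)
        _ = σ₂ ^ 2 * η₂ := by ring
    have hB : |ρ * σ₁ * σ₂ * (-(η₁ * Real.sign x.1))| ≤ |ρ| * σ₁ * σ₂ * η₁ := by
      rw [abs_mul, abs_neg, abs_mul, abs_mul, abs_mul, abs_of_nonneg hσ₁.le,
        abs_of_nonneg hσ₂.le, abs_of_nonneg hη₁0.le]
      calc |ρ| * σ₁ * σ₂ * (η₁ * |Real.sign x.1|) ≤ |ρ| * σ₁ * σ₂ * (η₁ * 1) :=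
            mul_le_mul_of_nonneg_left (mul_le_mul_of_nonneg_left (hsgn1 x.1) hη₁0.le)
              (mul_nonneg (mul_nonneg (abs_nonneg ρ) hσ₁.le) hσ₂.le)
        _ = |ρ| * σ₁ * σ₂ * η₁ := by ring
    have h1 := abs_add_le (r - σ₂ ^ 2 / 2)
      ((1 / 2) * (ρ * σ₁ * σ₂ * (-(η₁ * Real.sign x.1)) + σ₂ ^ 2 * (-(η₂ * Real.sign x.2))))
    have h2 : |(1 / 2) * (ρ * σ₁ * σ₂ * (-(η₁ * Real.sign x.1)) +
        σ₂ ^ 2 * (-(η₂ * Real.sign x.2)))|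
        ≤ (|ρ| * σ₁ * σ₂ * η₁ + σ₂ ^ 2 * η₂) / 2 := by
      rw [abs_mul, abs_of_nonneg (by norm_num : (0:ℝ) ≤ 1 / 2)]
      have := abs_add_le (ρ * σ₁ * σ₂ * (-(η₁ * Real.sign x.1)))
        (σ₂ ^ 2 * (-(η₂ * Real.sign x.2)))
      linarith
    linarith
    -- scalar quantities
  set L : ℝ := ∫ x : ℝ × ℝ, (u x.1 x.2) ^ 2 * Real.exp (2 * η x) with hLdef
  set I₁ : ℝ := ∫ x : ℝ × ℝ, p₁ x ^ 2 * Real.exp (2 * η x) with hI₁def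
  set I₂ : ℝ := ∫ x : ℝ × ℝ, p₂ x ^ 2 * Real.exp (2 * η x) with hI₂def
  have hL0 : 0 ≤ L := by
    rw [hLdef]; exact integral_nonneg fun x => mul_nonneg (sq_nonneg _) (Real.exp_pos _).le
  have hI₁0 : 0 ≤ I₁ := by
    rw [hI₁def]; exact integral_nonneg fun x => mul_nonneg (sq_nonneg _) (Real.exp_pos _).le
  have hI₂0 : 0 ≤ I₂ := by
    rw [hI₂def]; exact integral_nonneg fun x => mul_nonneg (sq_nonneg _) (Real.exp_pos _).le
  have hL2eq : L2sq u = L := by rw [hL2e u, hLdef]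
  have hH1eq : H1sq u = L + (I₁ + I₂) := by
    rw [hH1e u]
    have h1 : (fun x : ℝ × ℝ =>
        ((u x.1 x.2) ^ 2 + (d₁ u x) ^ 2 + (d₂ u x) ^ 2) * Real.exp (2 * η x))
        = fun x => (u x.1 x.2) ^ 2 * Real.exp (2 * η x) +
            (p₁ x ^ 2 * Real.exp (2 * η x) + p₂ x ^ 2 * Real.exp (2 * η x)) := by
      funext x; rw [hd1 x, hd2 x]; ring
    have i12 : Integrable fun x : ℝ × ℝ =>
        p₁ x ^ 2 * Real.exp (2 * η x) + p₂ x ^ 2 * Real.exp (2 * η x) := iI₁f.add iI₂f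
    rw [h1, integral_add iw i12, integral_add iI₁f iI₂f, ← hLdef, ← hI₁def, ← hI₂def]
  set A : ℝ := ∫ x : ℝ × ℝ,
    (1 / 2) * (σ₁ ^ 2 * p₁ x * p₁ x + ρ * σ₁ * σ₂ * (p₁ x * p₂ x + p₂ x * p₁ x) +
      σ₂ ^ 2 * p₂ x * p₂ x) * Real.exp (2 * η x) with hAdef
  set DR : ℝ := ∫ x : ℝ × ℝ,
    (((r - σ₁ ^ 2 / 2) + K₁ x) * p₁ x + ((r - σ₂ ^ 2 / 2) + K₂ x) * p₂ x) * u x.1 x.2 *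
      Real.exp (2 * η x) with hDRdef
  -- lower bound on the quadratic part
  have hAlow : c0 * I₁ + c0 * I₂ ≤ A := by
    have h1 : c0 * I₁ + c0 * I₂ = ∫ x : ℝ × ℝ,
        (c0 * (p₁ x ^ 2 * Real.exp (2 * η x)) + c0 * (p₂ x ^ 2 * Real.exp (2 * η x))) := by
      rw [integral_add (iI₁f.const_mul c0) (iI₂f.const_mul c0), integral_const_mul,
        integral_const_mul, ← hI₁def, ← hI₂def]
    rw [hAdef, h1]
    refine integral_mono_of_nonneg (Filter.Eventually.of_forall fun x => ?_) iQf
      (Filter.Eventually.of_forall fun x => ?_)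
    · have h1 := mul_nonneg (sq_nonneg (p₁ x)) (Real.exp_pos (2 * η x)).le
      have h2 := mul_nonneg (sq_nonneg (p₂ x)) (Real.exp_pos (2 * η x)).le
      exact add_nonneg (mul_nonneg hc0.le h1) (mul_nonneg hc0.le h2)
    · have hq := quad_lower σ₁ σ₂ ρ hρ (p₁ x) (p₂ x)
      rw [← hmdef, ← hc0def] at hq
      have hq' := mul_le_mul_of_nonneg_right hq (Real.exp_pos (2 * η x)).le
      calc c0 * (p₁ x ^ 2 * Real.exp (2 * η x)) + c0 * (p₂ x ^ 2 * Real.exp (2 * η x))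
          = c0 * (p₁ x ^ 2 + p₂ x ^ 2) * Real.exp (2 * η x) := by ring
        _ ≤ 1 / 2 * (σ₁ ^ 2 * p₁ x * p₁ x + ρ * σ₁ * σ₂ * (p₁ x * p₂ x + p₂ x * p₁ x) +
            σ₂ ^ 2 * p₂ x * p₂ x) * Real.exp (2 * η x) := hq'

  -- bound on the drift part
  have hptDR : ∀ x : ℝ × ℝ,
      |(((r - σ₁ ^ 2 / 2) + K₁ x) * p₁ x + ((r - σ₂ ^ 2 / 2) + K₂ x) * p₂ x) * u x.1 x.2 *
        Real.exp (2 * η x)|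
      ≤ c0 / 8 * (p₁ x ^ 2 * Real.exp (2 * η x)) +
          2 * M₁ ^ 2 / c0 * ((u x.1 x.2) ^ 2 * Real.exp (2 * η x)) +
        (c0 / 8 * (p₂ x ^ 2 * Real.exp (2 * η x)) +
          2 * M₂ ^ 2 / c0 * ((u x.1 x.2) ^ 2 * Real.exp (2 * η x))) := by
    intro x
    have hAb : |((r - σ₁ ^ 2 / 2) + K₁ x) * p₁ x + ((r - σ₂ ^ 2 / 2) + K₂ x) * p₂ x|
        ≤ M₁ * |p₁ x| + M₂ * |p₂ x| := by
      refine (abs_add_le _ _).trans ?_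
      rw [abs_mul, abs_mul]
      exact add_le_add (mul_le_mul_of_nonneg_right (hc₁b x) (abs_nonneg _))
        (mul_le_mul_of_nonneg_right (hc₂b x) (abs_nonneg _))
    have hy₁ := weighted_young M₁ (p₁ x) (u x.1 x.2) (Real.exp (2 * η x)) c0 hM₁0
      (Real.exp_pos _).le hc0
    have hy₂ := weighted_young M₂ (p₂ x) (u x.1 x.2) (Real.exp (2 * η x)) c0 hM₂0
      (Real.exp_pos _).le hc0
    calc |(((r - σ₁ ^ 2 / 2) + K₁ x) * p₁ x + ((r - σ₂ ^ 2 / 2) + K₂ x) * p₂ x) * u x.1 x.2 *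
        Real.exp (2 * η x)|
        = |((r - σ₁ ^ 2 / 2) + K₁ x) * p₁ x + ((r - σ₂ ^ 2 / 2) + K₂ x) * p₂ x| *
            |u x.1 x.2| * Real.exp (2 * η x) := by
          rw [abs_mul, abs_mul, abs_of_pos (Real.exp_pos _)]
      _ ≤ (M₁ * |p₁ x| + M₂ * |p₂ x|) * |u x.1 x.2| * Real.exp (2 * η x) :=
          mul_le_mul_of_nonneg_right (mul_le_mul_of_nonneg_right hAb (abs_nonneg _))
            (Real.exp_pos _).le
      _ = M₁ * |p₁ x| * |u x.1 x.2| * Real.exp (2 * η x) +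
          M₂ * |p₂ x| * |u x.1 x.2| * Real.exp (2 * η x) := by ring
      _ ≤ _ := add_le_add hy₁ hy₂
  have mK₁ : Measurable K₁ := by
    rw [show K₁ = fun x : ℝ × ℝ => (1 / 2) * (σ₁ ^ 2 * (-(η₁ * Real.sign x.1)) +
      ρ * σ₁ * σ₂ * (-(η₂ * Real.sign x.2))) from funext hK₁e]
    exact ((((hsgnm.comp measurable_fst).const_mul η₁).neg.const_mul (σ₁ ^ 2)).add
      (((hsgnm.comp measurable_snd).const_mul η₂).neg.const_mul (ρ * σ₁ * σ₂))).const_mul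
      (1 / 2)
  have mK₂ : Measurable K₂ := by
    rw [show K₂ = fun x : ℝ × ℝ => (1 / 2) * (ρ * σ₁ * σ₂ * (-(η₁ * Real.sign x.1)) +
      σ₂ ^ 2 * (-(η₂ * Real.sign x.2))) from funext hK₂e]
    exact ((((hsgnm.comp measurable_fst).const_mul η₁).neg.const_mul (ρ * σ₁ * σ₂)).add
      (((hsgnm.comp measurable_snd).const_mul η₂).neg.const_mul (σ₂ ^ 2))).const_mul (1 / 2)
  have iDRf : Integrable fun x : ℝ × ℝ =>
      (((r - σ₁ ^ 2 / 2) + K₁ x) * p₁ x + ((r - σ₂ ^ 2 / 2) + K₂ x) * p₂ x) * u x.1 x.2 *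
        Real.exp (2 * η x) := by
    have mDR : Measurable fun x : ℝ × ℝ =>
        (((r - σ₁ ^ 2 / 2) + K₁ x) * p₁ x + ((r - σ₂ ^ 2 / 2) + K₂ x) * p₂ x) * u x.1 x.2 *
          Real.exp (2 * η x) :=
      ((((mK₁.const_add (r - σ₁ ^ 2 / 2)).mul hp₁c.measurable).add
        ((mK₂.const_add (r - σ₂ ^ 2 / 2)).mul hp₂c.measurable)).mul hUc.measurable).mul
        hec.measurable
    refine Integrable.mono' (((iI₁f.const_mul (c0 / 8)).add
      (iw.const_mul (2 * M₁ ^ 2 / c0))).add ((iI₂f.const_mul (c0 / 8)).add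
      (iw.const_mul (2 * M₂ ^ 2 / c0)))) mDR.aestronglyMeasurable ?_
    filter_upwards with x
    rw [Real.norm_eq_abs]
    exact hptDR x
  have hDRb : |DR| ≤ c0 / 8 * I₁ + 2 * M₁ ^ 2 / c0 * L +
      (c0 / 8 * I₂ + 2 * M₂ ^ 2 / c0 * L) := by
    rw [hDRdef, ← Real.norm_eq_abs]
    refine (norm_integral_le_integral_norm _).trans ?_
    have h1 : (∫ x : ℝ × ℝ,
        ‖(((r - σ₁ ^ 2 / 2) + K₁ x) * p₁ x + ((r - σ₂ ^ 2 / 2) + K₂ x) * p₂ x) * u x.1 x.2 *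
          Real.exp (2 * η x)‖)
        ≤ ∫ x : ℝ × ℝ,
          (c0 / 8 * (p₁ x ^ 2 * Real.exp (2 * η x)) +
            2 * M₁ ^ 2 / c0 * ((u x.1 x.2) ^ 2 * Real.exp (2 * η x)) +
          (c0 / 8 * (p₂ x ^ 2 * Real.exp (2 * η x)) +
            2 * M₂ ^ 2 / c0 * ((u x.1 x.2) ^ 2 * Real.exp (2 * η x)))) := by
      refine integral_mono_of_nonneg (Filter.Eventually.of_forall fun x => norm_nonneg _)
        (((iI₁f.const_mul (c0 / 8)).add (iw.const_mul (2 * M₁ ^ 2 / c0))).add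
          ((iI₂f.const_mul (c0 / 8)).add (iw.const_mul (2 * M₂ ^ 2 / c0))))
        (Filter.Eventually.of_forall fun x => ?_)
      simpa only [Real.norm_eq_abs] using hptDR x
    refine h1.trans ?_
    have ia : Integrable fun x : ℝ × ℝ => c0 / 8 * (p₁ x ^ 2 * Real.exp (2 * η x)) +
        2 * M₁ ^ 2 / c0 * ((u x.1 x.2) ^ 2 * Real.exp (2 * η x)) :=
      (iI₁f.const_mul (c0 / 8)).add (iw.const_mul (2 * M₁ ^ 2 / c0))
    have ib : Integrable fun x : ℝ × ℝ => c0 / 8 * (p₂ x ^ 2 * Real.exp (2 * η x)) +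
        2 * M₂ ^ 2 / c0 * ((u x.1 x.2) ^ 2 * Real.exp (2 * η x)) :=
      (iI₂f.const_mul (c0 / 8)).add (iw.const_mul (2 * M₂ ^ 2 / c0))
    rw [integral_add ia ib,
      integral_add (iI₁f.const_mul (c0 / 8)) (iw.const_mul (2 * M₁ ^ 2 / c0)),
      integral_add (iI₂f.const_mul (c0 / 8)) (iw.const_mul (2 * M₂ ^ 2 / c0)),
      integral_const_mul, integral_const_mul, integral_const_mul, integral_const_mul,
      ← hI₁def, ← hI₂def, ← hLdef]
    -- translation identities
  have hsh₁ : ∀ (x : ℝ × ℝ) (y : ℝ), x + ((y, (0:ℝ)) : ℝ × ℝ) = (x.1 + y, x.2) := by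
    intro x y; apply Prod.ext <;> simp
  have hsh₂ : ∀ (x : ℝ × ℝ) (y : ℝ), x + (((0:ℝ), y) : ℝ × ℝ) = (x.1, x.2 + y) := by
    intro x y; apply Prod.ext <;> simp
  have hw₁ : ∀ (x : ℝ × ℝ) (y : ℝ), η x ≤ η (x + ((y, 0) : ℝ × ℝ)) + η₁ * |y| := by
    intro x y
    have e1 : η (x.1 + y, x.2) = -(η₁ * |x.1 + y| + η₂ * |x.2|) := hηe _
    rw [hsh₁ x y, e1, hηe x]
    have h := mul_le_mul_of_nonneg_left (abs_add_le x.1 y) hη₁0.le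
    linarith
  have hw₂ : ∀ (x : ℝ × ℝ) (y : ℝ), η x ≤ η (x + (((0:ℝ), y) : ℝ × ℝ)) + η₂ * |y| := by
    intro x y
    have e1 : η (x.1, x.2 + y) = -(η₁ * |x.1| + η₂ * |x.2 + y|) := hηe _
    rw [hsh₂ x y, e1, hηe x]
    have h := mul_le_mul_of_nonneg_left (abs_add_le x.2 y) hη₂0.le
    linarith
  -- convolution-type jump bounds
  obtain ⟨iT₁f, hT₁b⟩ := jump_conv_bound k₁ hk₁0 hk₁c η₁ hη₁0.le iGk₁
    (fun p : ℝ × ℝ => u p.1 p.2) hUc hs η hηc hη0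
    (fun y : ℝ => ((y, 0) : ℝ × ℝ)) (by fun_prop) hw₁
  obtain ⟨iT₂f, hT₂b⟩ := jump_conv_bound k₂ hk₂0 hk₂c η₂ hη₂0.le iGk₂
    (fun p : ℝ × ℝ => u p.1 p.2) hUc hs η hηc hη0
    (fun y : ℝ => (((0:ℝ), y) : ℝ × ℝ)) (by fun_prop) hw₂
  simp only [hsh₁] at iT₁f hT₁b
  simp only [hsh₂] at iT₂f hT₂b
  set T₁ : ℝ := ∫ x : ℝ × ℝ,
    (∫ y : ℝ, u (x.1 + y) x.2 * k₁ y) * (u x.1 x.2 * Real.exp (2 * η x)) with hT₁def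
  set T₂ : ℝ := ∫ x : ℝ × ℝ,
    (∫ y : ℝ, u x.1 (x.2 + y) * k₂ y) * (u x.1 x.2 * Real.exp (2 * η x)) with hT₂def
  set D₁ : ℝ := ∫ x : ℝ × ℝ, p₁ x * (u x.1 x.2 * Real.exp (2 * η x)) with hD₁def
  set D₂ : ℝ := ∫ x : ℝ × ℝ, p₂ x * (u x.1 x.2 * Real.exp (2 * η x)) with hD₂def
  rw [← hG₁def, ← hLdef] at hT₁b
  rw [← hG₂def, ← hLdef] at hT₂b
  -- pointwise decomposition of the jump integrand
  have hJx : ∀ x : ℝ × ℝ, J u x * u x.1 x.2 * Real.exp (2 * η x)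
      = ((∫ y : ℝ, u (x.1 + y) x.2 * k₁ y) * (u x.1 x.2 * Real.exp (2 * η x))
          + (∫ y : ℝ, u x.1 (x.2 + y) * k₂ y) * (u x.1 x.2 * Real.exp (2 * η x)))
        - (Λ₁ * ((u x.1 x.2) ^ 2 * Real.exp (2 * η x))
            + Λ₂ * ((u x.1 x.2) ^ 2 * Real.exp (2 * η x))
            + (E₁r * (p₁ x * (u x.1 x.2 * Real.exp (2 * η x)))
              + E₂r * (p₂ x * (u x.1 x.2 * Real.exp (2 * η x))))) := by
    intro x
    have h1 := inner_decomp k₁ hk₁0 hk₁c ik₁ iek₁ (fun y => u (x.1 + y) x.2)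
      (hUc.comp ((continuous_const.add continuous_id).prodMk continuous_const)) Mu
      (fun t => hMu _ _) (u x.1 x.2) (p₁ x) (u x.1 x.2 * Real.exp (2 * η x))
    have h2 := inner_decomp k₂ hk₂0 hk₂c ik₂ iek₂ (fun y => u x.1 (x.2 + y))
      (hUc.comp (continuous_const.prodMk (continuous_const.add continuous_id))) Mu
      (fun t => hMu _ _) (u x.1 x.2) (p₂ x) (u x.1 x.2 * Real.exp (2 * η x))
    rw [← hΛ₁def, ← hE₁rdef] at h1
    rw [← hΛ₂def, ← hE₂rdef] at h2
    beta_reduce at h1 h2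
    rw [hJe u x]
    simp only [hd1, hd2]
    linear_combination h1 + h2
  -- splitting the jump integral
  have hJsplit : (∫ x : ℝ × ℝ, J u x * u x.1 x.2 * Real.exp (2 * η x))
      = T₁ + T₂ - (Λ₁ * L + Λ₂ * L + (E₁r * D₁ + E₂r * D₂)) := by
    rw [show (fun x : ℝ × ℝ => J u x * u x.1 x.2 * Real.exp (2 * η x))
      = fun x : ℝ × ℝ =>
        ((∫ y : ℝ, u (x.1 + y) x.2 * k₁ y) * (u x.1 x.2 * Real.exp (2 * η x))
          + (∫ y : ℝ, u x.1 (x.2 + y) * k₂ y) * (u x.1 x.2 * Real.exp (2 * η x)))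
        - (Λ₁ * ((u x.1 x.2) ^ 2 * Real.exp (2 * η x))
            + Λ₂ * ((u x.1 x.2) ^ 2 * Real.exp (2 * η x))
            + (E₁r * (p₁ x * (u x.1 x.2 * Real.exp (2 * η x)))
              + E₂r * (p₂ x * (u x.1 x.2 * Real.exp (2 * η x)))))
      from funext hJx]
    have iTT : Integrable fun x : ℝ × ℝ =>
        (∫ y : ℝ, u (x.1 + y) x.2 * k₁ y) * (u x.1 x.2 * Real.exp (2 * η x))
          + (∫ y : ℝ, u x.1 (x.2 + y) * k₂ y) * (u x.1 x.2 * Real.exp (2 * η x)) :=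
      iT₁f.add iT₂f
    have iS1 : Integrable fun x : ℝ × ℝ =>
        Λ₁ * ((u x.1 x.2) ^ 2 * Real.exp (2 * η x))
          + Λ₂ * ((u x.1 x.2) ^ 2 * Real.exp (2 * η x)) :=
      (iw.const_mul Λ₁).add (iw.const_mul Λ₂)
    have iS2 : Integrable fun x : ℝ × ℝ =>
        E₁r * (p₁ x * (u x.1 x.2 * Real.exp (2 * η x)))
          + E₂r * (p₂ x * (u x.1 x.2 * Real.exp (2 * η x))) :=
      (ipU₁.const_mul E₁r).add (ipU₂.const_mul E₂r)
    have iS : Integrable fun x : ℝ × ℝ =>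
        Λ₁ * ((u x.1 x.2) ^ 2 * Real.exp (2 * η x))
          + Λ₂ * ((u x.1 x.2) ^ 2 * Real.exp (2 * η x))
          + (E₁r * (p₁ x * (u x.1 x.2 * Real.exp (2 * η x)))
            + E₂r * (p₂ x * (u x.1 x.2 * Real.exp (2 * η x)))) :=
      iS1.add iS2
    rw [integral_sub iTT iS, integral_add iT₁f iT₂f, integral_add iS1 iS2,
      integral_add (iw.const_mul Λ₁) (iw.const_mul Λ₂),
      integral_add (ipU₁.const_mul E₁r) (ipU₂.const_mul E₂r),
      integral_const_mul, integral_const_mul, integral_const_mul, integral_const_mul,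
      ← hLdef, ← hD₁def, ← hD₂def, ← hT₁def, ← hT₂def]
  -- bounds for the first-order jump correction terms
  have hD₁b : E₁ * |D₁| ≤ c0 / 8 * I₁ + 2 * E₁ ^ 2 / c0 * L := by
    have h1 : |D₁| ≤ ∫ x : ℝ × ℝ, ‖p₁ x * (u x.1 x.2 * Real.exp (2 * η x))‖ := by
      rw [hD₁def, ← Real.norm_eq_abs]
      exact norm_integral_le_integral_norm _
    have h2 : E₁ * |D₁| ≤ ∫ x : ℝ × ℝ, E₁ * ‖p₁ x * (u x.1 x.2 * Real.exp (2 * η x))‖ := by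
      rw [integral_const_mul]
      exact mul_le_mul_of_nonneg_left h1 hE₁0
    refine h2.trans ?_
    have h3 : (∫ x : ℝ × ℝ, E₁ * ‖p₁ x * (u x.1 x.2 * Real.exp (2 * η x))‖)
        ≤ ∫ x : ℝ × ℝ, (c0 / 8 * (p₁ x ^ 2 * Real.exp (2 * η x))
            + 2 * E₁ ^ 2 / c0 * ((u x.1 x.2) ^ 2 * Real.exp (2 * η x))) := by
      refine integral_mono_of_nonneg
        (Filter.Eventually.of_forall fun x => mul_nonneg hE₁0 (norm_nonneg _))
        ((iI₁f.const_mul (c0 / 8)).add (iw.const_mul (2 * E₁ ^ 2 / c0)))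
        (Filter.Eventually.of_forall fun x => ?_)
      beta_reduce
      have hy := weighted_young E₁ (p₁ x) (u x.1 x.2) (Real.exp (2 * η x)) c0 hE₁0
        (Real.exp_pos _).le hc0
      have he : ‖p₁ x * (u x.1 x.2 * Real.exp (2 * η x))‖
          = |p₁ x| * |u x.1 x.2| * Real.exp (2 * η x) := by
        rw [Real.norm_eq_abs, abs_mul, abs_mul, abs_of_pos (Real.exp_pos _)]
        ring
      rw [he]
      calc E₁ * (|p₁ x| * |u x.1 x.2| * Real.exp (2 * η x))
          = E₁ * |p₁ x| * |u x.1 x.2| * Real.exp (2 * η x) := by ring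
        _ ≤ _ := hy
    refine h3.trans ?_
    rw [integral_add (iI₁f.const_mul (c0 / 8)) (iw.const_mul (2 * E₁ ^ 2 / c0)),
      integral_const_mul, integral_const_mul, ← hI₁def, ← hLdef]
  have hD₂b : E₂ * |D₂| ≤ c0 / 8 * I₂ + 2 * E₂ ^ 2 / c0 * L := by
    have h1 : |D₂| ≤ ∫ x : ℝ × ℝ, ‖p₂ x * (u x.1 x.2 * Real.exp (2 * η x))‖ := by
      rw [hD₂def, ← Real.norm_eq_abs]
      exact norm_integral_le_integral_norm _
    have h2 : E₂ * |D₂| ≤ ∫ x : ℝ × ℝ, E₂ * ‖p₂ x * (u x.1 x.2 * Real.exp (2 * η x))‖ := by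
      rw [integral_const_mul]
      exact mul_le_mul_of_nonneg_left h1 hE₂0
    refine h2.trans ?_
    have h3 : (∫ x : ℝ × ℝ, E₂ * ‖p₂ x * (u x.1 x.2 * Real.exp (2 * η x))‖)
        ≤ ∫ x : ℝ × ℝ, (c0 / 8 * (p₂ x ^ 2 * Real.exp (2 * η x))
            + 2 * E₂ ^ 2 / c0 * ((u x.1 x.2) ^ 2 * Real.exp (2 * η x))) := by
      refine integral_mono_of_nonneg
        (Filter.Eventually.of_forall fun x => mul_nonneg hE₂0 (norm_nonneg _))
        ((iI₂f.const_mul (c0 / 8)).add (iw.const_mul (2 * E₂ ^ 2 / c0)))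
        (Filter.Eventually.of_forall fun x => ?_)
      beta_reduce
      have hy := weighted_young E₂ (p₂ x) (u x.1 x.2) (Real.exp (2 * η x)) c0 hE₂0
        (Real.exp_pos _).le hc0
      have he : ‖p₂ x * (u x.1 x.2 * Real.exp (2 * η x))‖
          = |p₂ x| * |u x.1 x.2| * Real.exp (2 * η x) := by
        rw [Real.norm_eq_abs, abs_mul, abs_mul, abs_of_pos (Real.exp_pos _)]
        ring
      rw [he]
      calc E₂ * (|p₂ x| * |u x.1 x.2| * Real.exp (2 * η x))
          = E₂ * |p₂ x| * |u x.1 x.2| * Real.exp (2 * η x) := by ring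
        _ ≤ _ := hy
    refine h3.trans ?_
    rw [integral_add (iI₂f.const_mul (c0 / 8)) (iw.const_mul (2 * E₂ ^ 2 / c0)),
      integral_const_mul, integral_const_mul, ← hI₂def, ← hLdef]
  -- final assembly
  have haη2 : aη u u = (A - DR) - (T₁ + T₂ - (Λ₁ * L + Λ₂ * L + (E₁r * D₁ + E₂r * D₂))) := by
    rw [haηe u u]
    simp only [hd1, hd2]
    have hsf : (∫ x : ℝ × ℝ,
        ((1 / 2) * (σ₁ ^ 2 * p₁ x * p₁ x + ρ * σ₁ * σ₂ * (p₁ x * p₂ x + p₂ x * p₁ x) +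
            σ₂ ^ 2 * p₂ x * p₂ x) -
          (((r - σ₁ ^ 2 / 2) + K₁ x) * p₁ x + ((r - σ₂ ^ 2 / 2) + K₂ x) * p₂ x) * u x.1 x.2) *
          Real.exp (2 * η x)) = A - DR := by
      rw [show (fun x : ℝ × ℝ =>
          ((1 / 2) * (σ₁ ^ 2 * p₁ x * p₁ x + ρ * σ₁ * σ₂ * (p₁ x * p₂ x + p₂ x * p₁ x) +
              σ₂ ^ 2 * p₂ x * p₂ x) -
            (((r - σ₁ ^ 2 / 2) + K₁ x) * p₁ x + ((r - σ₂ ^ 2 / 2) + K₂ x) * p₂ x) * u x.1 x.2) *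
            Real.exp (2 * η x))
        = fun x : ℝ × ℝ =>
            (1 / 2) * (σ₁ ^ 2 * p₁ x * p₁ x + ρ * σ₁ * σ₂ * (p₁ x * p₂ x + p₂ x * p₁ x) +
              σ₂ ^ 2 * p₂ x * p₂ x) * Real.exp (2 * η x) -
            (((r - σ₁ ^ 2 / 2) + K₁ x) * p₁ x + ((r - σ₂ ^ 2 / 2) + K₂ x) * p₂ x) * u x.1 x.2 *
              Real.exp (2 * η x)
        from funext fun x => by ring]
      rw [integral_sub iQf iDRf, ← hAdef, ← hDRdef]
    rw [hsf, hJsplit]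
  have habsE₁ : |E₁r * D₁| = E₁ * |D₁| := by rw [abs_mul, hE₁def]
  have habsE₂ : |E₂r * D₂| = E₂ * |D₂| := by rw [abs_mul, hE₂def]
  have hED₁ : -(c0 / 8 * I₁ + 2 * E₁ ^ 2 / c0 * L) ≤ E₁r * D₁ := by
    have h := neg_abs_le (E₁r * D₁)
    rw [habsE₁] at h
    linarith
  have hED₂ : -(c0 / 8 * I₂ + 2 * E₂ ^ 2 / c0 * L) ≤ E₂r * D₂ := by
    have h := neg_abs_le (E₂r * D₂)
    rw [habsE₂] at h
    linarith
  rw [ge_iff_le, hL2eq, hH1eq, haη2]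
  have hDR1 : DR ≤ c0 / 8 * I₁ + 2 * M₁ ^ 2 / c0 * L +
      (c0 / 8 * I₂ + 2 * M₂ ^ 2 / c0 * L) := (le_abs_self DR).trans hDRb
  have hT₁1 : T₁ ≤ G₁ * L := (le_abs_self T₁).trans hT₁b
  have hT₂1 : T₂ ≤ G₂ * L := (le_abs_self T₂).trans hT₂b
  linarith [mul_nonneg hc0.le hI₁0, mul_nonneg hc0.le hI₂0, mul_nonneg hc0.le hL0,
    mul_nonneg hΛ₁0 hL0, mul_nonneg hΛ₂0 hL0, mul_nonneg hG₁0 hL0, mul_nonneg hG₂0 hL0]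
end
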